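/- arXiv:2508.03667 — 2 statements merged into one kernel-verified Lean document; each statement's English description precedes it below -/
import Mathlib

section
/- Let R be a Γ-graded ring. Then rad^gr(R_R) = rad^gr(_RR) (the graded Jacobson radicals of R as a right and as a left R-module coincide); this common graded ideal, denoted rad^gr(R), is the largest graded ideal J of R such that J ∩ R_e = rad(R_e) for every e ∈ Γ₀, where rad(R_e) is the Jacobson radical of the unital ring R_e. -/
open CategoryTheory

universe u

instance addSubgroupNormalOfComm {M : Type*} [AddCommGroup M] (N : AddSubgroup M) :
    N.Normal := ⟨fun n hn g => by simpa [add_comm] using hn⟩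

variable {Γ : Type u} [Groupoid.{u} Γ]

/-- The morphisms of the groupoid `Γ`, bundled together with their endpoints.
For `γ : GrIdx Γ`, the morphism `γ.2.2 : γ.1 ⟶ γ.2.1` has domain `d(γ) = γ.1`
and range `r(γ) = γ.2.1`. -/
abbrev GrIdx (Γ : Type u) [Groupoid.{u} Γ] : Type u := Σ e f : Γ, e ⟶ f

/-- The data of a `Γ`-grading, a multiplication, and local units `1_e` on an
additive group `R`. -/
structure GRingData (Γ : Type u) [Groupoid.{u} Γ] (R : Type u) [AddCommGroup R] :
    Type u where
  mul : R → R → R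
  component : ∀ {e f : Γ}, (e ⟶ f) → AddSubgroup R
  one : Γ → R

/-- The data of a right scalar multiplication by `R` and a `Γ`-grading on an
additive group `M`. -/
structure GModData (Γ : Type u) [Groupoid.{u} Γ] (R : Type u) (M : Type u)
    [AddCommGroup M] : Type u where
  smul : M → R → M
  component : ∀ {e f : Γ}, (e ⟶ f) → AddSubgroup M

namespace GRingData

variable {R : Type u} [AddCommGroup R]

/-- `𝒜` makes `R` an (object unital) `Γ`-graded ring: `R` is an associative ring,
`R = ⊕_γ R_γ`, `R_γ R_δ ⊆ R_{γδ}` when `γδ` is defined and `R_γ R_δ = 0` otherwise,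
each `R_e` (`e ∈ Γ₀`) is unital with identity `1_e`, and
`1_{r(γ)} a = a 1_{d(γ)} = a` for all `a ∈ R_γ`. -/
structure IsObjectUnital (𝒜 : GRingData Γ R) : Prop where
  mul_assoc : ∀ a b c : R, 𝒜.mul (𝒜.mul a b) c = 𝒜.mul a (𝒜.mul b c)
  left_distrib : ∀ a b c : R, 𝒜.mul a (b + c) = 𝒜.mul a b + 𝒜.mul a c
  right_distrib : ∀ a b c : R, 𝒜.mul (a + b) c = 𝒜.mul a c + 𝒜.mul b c
  decompose : ∀ x : R, ∃ (s : Finset (GrIdx Γ)) (cf : GrIdx Γ → R),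
      (∀ γ ∈ s, cf γ ∈ 𝒜.component γ.2.2) ∧ x = ∑ γ ∈ s, cf γ
  independent : ∀ (s : Finset (GrIdx Γ)) (cf : GrIdx Γ → R),
      (∀ γ ∈ s, cf γ ∈ 𝒜.component γ.2.2) → ∑ γ ∈ s, cf γ = 0 → ∀ γ ∈ s, cf γ = 0
  mul_mem : ∀ {e f g : Γ} (γ : e ⟶ f) (δ : g ⟶ e) {a b : R},
      a ∈ 𝒜.component γ → b ∈ 𝒜.component δ → 𝒜.mul a b ∈ 𝒜.component (δ ≫ γ)
  mul_eq_zero : ∀ {e f g h : Γ} (γ : e ⟶ f) (δ : g ⟶ h) {a b : R},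
      h ≠ e → a ∈ 𝒜.component γ → b ∈ 𝒜.component δ → 𝒜.mul a b = 0
  one_mem : ∀ e : Γ, 𝒜.one e ∈ 𝒜.component (𝟙 e)
  one_mul : ∀ {e f : Γ} (γ : e ⟶ f) {a : R}, a ∈ 𝒜.component γ → 𝒜.mul (𝒜.one f) a = a
  mul_one : ∀ {e f : Γ} (γ : e ⟶ f) {a : R}, a ∈ 𝒜.component γ → 𝒜.mul a (𝒜.one e) = a

/-- `R` regarded as a (`Γ`-graded) right module over itself. -/
def toMod (𝒜 : GRingData Γ R) : GModData Γ R R where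
  smul := 𝒜.mul
  component := fun γ => 𝒜.component γ

end GRingData

namespace GModData

variable {R : Type u} {M : Type u} {M' : Type u} [AddCommGroup M] [AddCommGroup M']

/-- `ℳ` makes `M` a unital `Γ`-graded right module over the `Γ`-graded ring `𝒜`:
`M` is a right `R`-module, `M = ⊕_γ M_γ`, `M_σ R_τ ⊆ M_{στ}` when `στ` is defined
and `M_σ R_τ = 0` otherwise, and `m 1_{d(σ)} = m` for all `m ∈ M_σ`. -/
structure IsGraded [AddCommGroup R] (𝒜 : GRingData Γ R) (ℳ : GModData Γ R M) :
    Prop where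
  add_smul : ∀ (m n : M) (a : R), ℳ.smul (m + n) a = ℳ.smul m a + ℳ.smul n a
  smul_add : ∀ (m : M) (a b : R), ℳ.smul m (a + b) = ℳ.smul m a + ℳ.smul m b
  smul_mul : ∀ (m : M) (a b : R), ℳ.smul m (𝒜.mul a b) = ℳ.smul (ℳ.smul m a) b
  decompose : ∀ x : M, ∃ (s : Finset (GrIdx Γ)) (cf : GrIdx Γ → M),
      (∀ γ ∈ s, cf γ ∈ ℳ.component γ.2.2) ∧ x = ∑ γ ∈ s, cf γ
  independent : ∀ (s : Finset (GrIdx Γ)) (cf : GrIdx Γ → M),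
      (∀ γ ∈ s, cf γ ∈ ℳ.component γ.2.2) → ∑ γ ∈ s, cf γ = 0 → ∀ γ ∈ s, cf γ = 0
  smul_mem : ∀ {e f g : Γ} (σ : e ⟶ f) (τ : g ⟶ e) {m : M} {a : R},
      m ∈ ℳ.component σ → a ∈ 𝒜.component τ → ℳ.smul m a ∈ ℳ.component (τ ≫ σ)
  smul_eq_zero : ∀ {e f g h : Γ} (σ : e ⟶ f) (τ : g ⟶ h) {m : M} {a : R},
      h ≠ e → m ∈ ℳ.component σ → a ∈ 𝒜.component τ → ℳ.smul m a = 0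
  smul_one : ∀ {e f : Γ} (σ : e ⟶ f) {m : M}, m ∈ ℳ.component σ →
      ℳ.smul m (𝒜.one e) = m

/-- An element of `M` is homogeneous if it belongs to some homogeneous component. -/
def IsHomogeneous (ℳ : GModData Γ R M) (m : M) : Prop :=
  ∃ (e f : Γ) (γ : e ⟶ f), m ∈ ℳ.component γ

/-- `N` is a graded submodule of `M`: a submodule (subgroup closed under the right
`R`-action) generated by its homogeneous elements, i.e. `N = ⊕_γ (N ∩ M_γ)`. -/
def IsGrSub (ℳ : GModData Γ R M) (N : AddSubgroup M) : Prop :=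
  (∀ m ∈ N, ∀ a : R, ℳ.smul m a ∈ N) ∧
  ∀ n ∈ N, n ∈ AddSubgroup.closure {x : M | x ∈ N ∧ ℳ.IsHomogeneous x}

/-- `M` is gr-noetherian: there is no strictly increasing infinite chain of graded
submodules. -/
def GrNoetherian (ℳ : GModData Γ R M) : Prop :=
  ¬ ∃ c : ℕ → AddSubgroup M, (∀ n, ℳ.IsGrSub (c n)) ∧ ∀ n, c n < c (n + 1)

/-- `M` is gr-artinian: there is no strictly decreasing infinite chain of graded
submodules. -/
def GrArtinian (ℳ : GModData Γ R M) : Prop :=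
  ¬ ∃ c : ℕ → AddSubgroup M, (∀ n, ℳ.IsGrSub (c n)) ∧ ∀ n, c (n + 1) < c n

/-- The `R`-submodule of `M` generated by a set `X`. -/
def rClosure (ℳ : GModData Γ R M) (X : Set M) : AddSubgroup M :=
  sInf {N : AddSubgroup M | X ⊆ N ∧ ∀ m ∈ N, ∀ a : R, ℳ.smul m a ∈ N}

/-- `M` is finitely generated (as a right `R`-module). -/
def FG (ℳ : GModData Γ R M) : Prop := ∃ s : Finset M, ℳ.rClosure ↑s = ⊤

/-- The submodule `N` of `M` is finitely generated. -/
def FGSub (ℳ : GModData Γ R M) (N : AddSubgroup M) : Prop :=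
  ∃ s : Finset M, ↑s ⊆ (N : Set M) ∧ ℳ.rClosure ↑s = N

/-- `M` is finitely gr-cogenerated: every family of graded submodules with zero
intersection has a finite subfamily with zero intersection. -/
def FinGrCogenerated (ℳ : GModData Γ R M) : Prop :=
  ∀ S : Set (AddSubgroup M), (∀ N ∈ S, ℳ.IsGrSub N) → sInf S = ⊥ →
    ∃ t : Finset (AddSubgroup M), ↑t ⊆ S ∧ t.inf id = ⊥

/-- The quotient module `M/N`, with grading `(M/N)_γ = (M_γ + N)/N`. -/
noncomputable def quot (ℳ : GModData Γ R M) (N : AddSubgroup M) :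
    GModData Γ R (M ⧸ N) where
  smul x a := QuotientAddGroup.mk (ℳ.smul (Quotient.out x) a)
  component := fun γ => (ℳ.component γ).map (QuotientAddGroup.mk' N)

open scoped Classical in
/-- The submodule `N`, regarded as a `Γ`-graded right `R`-module. -/
noncomputable def restrict (ℳ : GModData Γ R M) (N : AddSubgroup M) :
    GModData Γ R ↥N where
  smul m a := if h : ℳ.smul (↑m) a ∈ N then ⟨ℳ.smul (↑m) a, h⟩ else 0
  component := fun γ => (ℳ.component γ).addSubgroupOf N

/-- The subquotient module `P/N` (for `N ≤ P` graded submodules of `M`). -/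
noncomputable def subquot (ℳ : GModData Γ R M) (N P : AddSubgroup M) :
    GModData Γ R (↥P ⧸ N.addSubgroupOf P) :=
  (ℳ.restrict P).quot (N.addSubgroupOf P)

/-- `M(e) = ⊕_{r(γ) = e} M_γ`, for `e ∈ Γ₀`. -/
def part (ℳ : GModData Γ R M) (e : Γ) : AddSubgroup M :=
  ⨆ (f : Γ) (γ : f ⟶ e), ℳ.component γ

/-- `Γ'₀(M) = {e ∈ Γ₀ : M(e) ≠ 0}`. -/
def partSupport (ℳ : GModData Γ R M) : Set Γ := {e : Γ | ℳ.part e ≠ ⊥}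

/-- `M` is `Γ₀`-noetherian: `M(e)` is gr-noetherian for every `e ∈ Γ₀`. -/
def G0Noetherian (ℳ : GModData Γ R M) : Prop :=
  ∀ e : Γ, (ℳ.restrict (ℳ.part e)).GrNoetherian

/-- `M` is `Γ₀`-artinian: `M(e)` is gr-artinian for every `e ∈ Γ₀`. -/
def G0Artinian (ℳ : GModData Γ R M) : Prop :=
  ∀ e : Γ, (ℳ.restrict (ℳ.part e)).GrArtinian

/-- `M` is gr-simple: `M ≠ 0` and its only graded submodules are `0` and `M`. -/
def IsGrSimple (ℳ : GModData Γ R M) : Prop :=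
  (⊤ : AddSubgroup M) ≠ ⊥ ∧ ∀ N : AddSubgroup M, ℳ.IsGrSub N → N = ⊥ ∨ N = ⊤

/-- `N` is a gr-simple graded submodule of `M`. -/
def IsGrSimpleSub (ℳ : GModData Γ R M) (N : AddSubgroup M) : Prop :=
  ℳ.IsGrSub N ∧ N ≠ ⊥ ∧
    ∀ L : AddSubgroup M, ℳ.IsGrSub L → L ≤ N → L = ⊥ ∨ L = N

/-- `N` is a gr-maximal graded submodule of `M`. -/
def IsGrMaximalSub (ℳ : GModData Γ R M) (N : AddSubgroup M) : Prop :=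
  ℳ.IsGrSub N ∧ N ≠ ⊤ ∧
    ∀ L : AddSubgroup M, ℳ.IsGrSub L → N ≤ L → L = N ∨ L = ⊤

/-- The graded Jacobson radical of `M`: the intersection of all gr-maximal graded
submodules of `M` (equal to `M` when there are none). -/
def grRad (ℳ : GModData Γ R M) : AddSubgroup M := sInf {N | ℳ.IsGrMaximalSub N}

/-- The gr-socle of `M`: the sum of all gr-simple graded submodules of `M`
(equal to `0` when there are none). -/
def grSoc (ℳ : GModData Γ R M) : AddSubgroup M := sSup {N | ℳ.IsGrSimpleSub N}

/-- `N` is gr-superfluous in `M`. -/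
def GrSuperfluous (ℳ : GModData Γ R M) (N : AddSubgroup M) : Prop :=
  ∀ X : AddSubgroup M, ℳ.IsGrSub X → N ⊔ X = ⊤ → X = ⊤

/-- `N` is gr-essential in `M`. -/
def GrEssential (ℳ : GModData Γ R M) (N : AddSubgroup M) : Prop :=
  ∀ X : AddSubgroup M, ℳ.IsGrSub X → N ⊓ X = ⊥ → X = ⊥

/-- `M` is gr-semisimple: the sum of all gr-simple graded submodules is `M`. -/
def GrSemisimple (ℳ : GModData Γ R M) : Prop :=
  sSup {N : AddSubgroup M | ℳ.IsGrSimpleSub N} = ⊤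

/-- `c 0 = 0 ⊆ c 1 ⊆ ⋯ ⊆ c n = M` is a gr-composition series of `M` of length `n`. -/
def IsGrCompSeries (ℳ : GModData Γ R M) (n : ℕ) (c : ℕ → AddSubgroup M) : Prop :=
  c 0 = ⊥ ∧ c n = ⊤ ∧ (∀ i, i ≤ n → ℳ.IsGrSub (c i)) ∧
  (∀ i, i < n → c i ≤ c (i + 1)) ∧
  ∀ i, i < n → (ℳ.subquot (c i) (c (i + 1))).IsGrSimple

/-- `M` has finite gr-length: it admits a gr-composition series. -/
def FiniteGrLength (ℳ : GModData Γ R M) : Prop := ∃ n c, ℳ.IsGrCompSeries n c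

/-- `g : M → M'` is a gr-homomorphism of graded right `R`-modules. -/
def IsGrHom (ℳ : GModData Γ R M) (𝒩 : GModData Γ R M') (g : M → M') : Prop :=
  (∀ m n : M, g (m + n) = g m + g n) ∧
  (∀ (m : M) (a : R), g (ℳ.smul m a) = 𝒩.smul (g m) a) ∧
  ∀ (e f : Γ) (σ : e ⟶ f), ∀ m ∈ ℳ.component σ, g m ∈ 𝒩.component σ

/-- `M` and `M'` are gr-isomorphic (there is a bijective gr-homomorphism). -/
def GrIso (ℳ : GModData Γ R M) (𝒩 : GModData Γ R M') : Prop :=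
  ∃ g : M → M', IsGrHom ℳ 𝒩 g ∧ Function.Bijective g

/-- `g : M → M'` is a homomorphism of degree `γ` (where `γ : e ⟶ f`, i.e.
`d(γ) = e`): `g(M_σ) ⊆ M'_{γσ}` when `γσ` is defined and `g(M_σ) = 0` otherwise. -/
def IsHomOfDeg (ℳ : GModData Γ R M) (𝒩 : GModData Γ R M') {e f : Γ} (γ : e ⟶ f)
    (g : M → M') : Prop :=
  (∀ m n : M, g (m + n) = g m + g n) ∧
  (∀ (m : M) (a : R), g (ℳ.smul m a) = 𝒩.smul (g m) a) ∧
  (∀ (a : Γ) (σ : a ⟶ e), ∀ m ∈ ℳ.component σ, g m ∈ 𝒩.component (σ ≫ γ)) ∧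
  (∀ (a b : Γ) (σ : a ⟶ b), b ≠ e → ∀ m ∈ ℳ.component σ, g m = 0)

/-- `MJ`: the submodule of `M` consisting of finite sums of elements `m a`,
`m ∈ M`, `a ∈ J`. -/
def smulSet [AddCommGroup R] (ℳ : GModData Γ R M) (J : AddSubgroup R) : AddSubgroup M :=
  AddSubgroup.closure {x : M | ∃ (m : M) (a : R), a ∈ J ∧ x = ℳ.smul m a}

open scoped Classical in
/-- The direct sum `⊕_{j ∈ J} M_j` of graded right modules, with grading
`(⊕_j M_j)_γ = ⊕_j (M_j)_γ`. -/
noncomputable def dsum {J : Type u} {Mf : J → Type u} [∀ j, AddCommGroup (Mf j)]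
    (df : ∀ j, GModData Γ R (Mf j)) : GModData Γ R (Π₀ j, Mf j) where
  smul m a :=
    if h : ∃ y : Π₀ j, Mf j, ∀ j, y j = (df j).smul (m j) a then h.choose else 0
  component := fun γ => ⨅ j : J, ((df j).component γ).comap (DFinsupp.evalAddMonoidHom j)

/-- A descending chain of graded submodules is tight if
`Γ'₀(M_i/M_{i+1}) ⊇ Γ'₀(M_{i+1}/M_{i+2})` for all `i`. -/
def TightDesc (ℳ : GModData Γ R M) (c : ℕ → AddSubgroup M) : Prop :=
  (∀ i, ℳ.IsGrSub (c i)) ∧ (∀ i, c (i + 1) ≤ c i) ∧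
  ∀ i, (ℳ.subquot (c (i + 2)) (c (i + 1))).partSupport ⊆
    (ℳ.subquot (c (i + 1)) (c i)).partSupport

/-- An ascending chain of graded submodules is tight if
`Γ'₀(M_{i+1}/M_i) ⊇ Γ'₀(M_{i+2}/M_{i+1})` for all `i`. -/
def TightAsc (ℳ : GModData Γ R M) (c : ℕ → AddSubgroup M) : Prop :=
  (∀ i, ℳ.IsGrSub (c i)) ∧ (∀ i, c i ≤ c (i + 1)) ∧
  ∀ i, (ℳ.subquot (c (i + 1)) (c (i + 2))).partSupport ⊆
    (ℳ.subquot (c i) (c (i + 1))).partSupport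

/-- `M` is strongly `Γ₀`-artinian: every tight descending chain of graded
submodules stabilizes. -/
def StronglyG0Artinian (ℳ : GModData Γ R M) : Prop :=
  ∀ c : ℕ → AddSubgroup M, ℳ.TightDesc c → ∃ n, ∀ m, n ≤ m → c m = c n

/-- `M` is strongly `Γ₀`-noetherian: every tight ascending chain of graded
submodules stabilizes. -/
def StronglyG0Noetherian (ℳ : GModData Γ R M) : Prop :=
  ∀ c : ℕ → AddSubgroup M, ℳ.TightAsc c → ∃ n, ∀ m, n ≤ m → c m = c n

end GModData

/-- `E` is a gr-injective graded right `R`-module: for all graded right `R`-modules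
`M`, `N`, every injective gr-homomorphism `g : N → M` and every gr-homomorphism
`h : N → E`, there is a gr-homomorphism `h' : M → E` with `h' ∘ g = h`. -/
def GrInjective {R : Type u} [AddCommGroup R] (𝒜 : GRingData Γ R) {E : Type u}
    [AddCommGroup E] (ℰ : GModData Γ R E) : Prop :=
  ∀ (M N : Type u) [AddCommGroup M] [AddCommGroup N]
    (ℳ : GModData Γ R M) (𝒩 : GModData Γ R N),
    ℳ.IsGraded 𝒜 → 𝒩.IsGraded 𝒜 →
    ∀ g : N → M, GModData.IsGrHom 𝒩 ℳ g → Function.Injective g →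
    ∀ h : N → E, GModData.IsGrHom 𝒩 ℰ h →
    ∃ h' : M → E, GModData.IsGrHom ℳ ℰ h' ∧ ∀ y : N, h' (g y) = h y

/-- A bundled `Γ`-graded right module over the graded ring `𝒜`. -/
structure GrModule (Γ : Type u) [Groupoid.{u} Γ] {R : Type u} [AddCommGroup R]
    (𝒜 : GRingData Γ R) : Type (u + 1) where
  carrier : Type u
  [addCommGroup : AddCommGroup carrier]
  data : GModData Γ R carrier
  graded : data.IsGraded 𝒜

attribute [instance] GrModule.addCommGroup

namespace GRingData

variable {R : Type u} [AddCommGroup R]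

/-- `R` is right `Γ₀`-noetherian. -/
def RightG0Noetherian (𝒜 : GRingData Γ R) : Prop := 𝒜.toMod.G0Noetherian

/-- `R` is right `Γ₀`-artinian. -/
def RightG0Artinian (𝒜 : GRingData Γ R) : Prop := 𝒜.toMod.G0Artinian

/-- The principal right ideal `aR`. -/
def principal (𝒜 : GRingData Γ R) (a : R) : AddSubgroup R :=
  AddSubgroup.closure {x : R | ∃ b : R, x = 𝒜.mul a b}

/-- A gr-principal graded right ideal: one of the form `aR` with `a` homogeneous. -/
def IsGrPrincipal (𝒜 : GRingData Γ R) (N : AddSubgroup R) : Prop :=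
  ∃ a : R, 𝒜.toMod.IsHomogeneous a ∧ N = 𝒜.principal a

/-- `N` is a graded left ideal of `R`, i.e. a graded submodule of `_R R`. -/
def IsGrLeftIdeal (𝒜 : GRingData Γ R) (N : AddSubgroup R) : Prop :=
  (∀ m ∈ N, ∀ a : R, 𝒜.mul a m ∈ N) ∧
  ∀ n ∈ N, n ∈ AddSubgroup.closure {x : R | x ∈ N ∧ 𝒜.toMod.IsHomogeneous x}

/-- `N` is a gr-maximal graded left ideal of `R`. -/
def IsGrMaxLeftIdeal (𝒜 : GRingData Γ R) (N : AddSubgroup R) : Prop :=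
  𝒜.IsGrLeftIdeal N ∧ N ≠ ⊤ ∧
    ∀ L : AddSubgroup R, 𝒜.IsGrLeftIdeal L → N ≤ L → L = N ∨ L = ⊤

/-- The graded Jacobson radical of `R` as a left module over itself:
the intersection of all gr-maximal graded left ideals. -/
def lRad (𝒜 : GRingData Γ R) : AddSubgroup R := sInf {N | 𝒜.IsGrMaxLeftIdeal N}

/-- `N` is a graded (two-sided) ideal of `R`. -/
def IsGrIdeal (𝒜 : GRingData Γ R) (N : AddSubgroup R) : Prop :=
  𝒜.toMod.IsGrSub N ∧ ∀ m ∈ N, ∀ a : R, 𝒜.mul a m ∈ N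

/-- `N ⊆ R_e` is a left ideal of the unital ring `R_e`. -/
def IsLeftIdealIn (𝒜 : GRingData Γ R) (e : Γ) (N : Set R) : Prop :=
  N ⊆ (𝒜.component (𝟙 e) : Set R) ∧ (0 : R) ∈ N ∧
  (∀ a ∈ N, ∀ b ∈ N, a - b ∈ N) ∧
  ∀ r ∈ 𝒜.component (𝟙 e), ∀ a ∈ N, 𝒜.mul r a ∈ N

/-- `N` is a maximal left ideal of the unital ring `R_e`. -/
def IsMaxLeftIdealIn (𝒜 : GRingData Γ R) (e : Γ) (N : Set R) : Prop :=
  𝒜.IsLeftIdealIn e N ∧ N ≠ (𝒜.component (𝟙 e) : Set R) ∧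
  ∀ L : Set R, 𝒜.IsLeftIdealIn e L → N ⊆ L →
    L = N ∨ L = (𝒜.component (𝟙 e) : Set R)

/-- The Jacobson radical `rad(R_e)` of the unital ring `R_e`, as a subset of `R`:
the intersection of all maximal left ideals of `R_e`. -/
def radIn (𝒜 : GRingData Γ R) (e : Γ) : Set R :=
  (𝒜.component (𝟙 e) : Set R) ∩ ⋂₀ {N : Set R | 𝒜.IsMaxLeftIdealIn e N}

/-- The quotient graded ring `R/I` of `R` by a graded ideal `I`. -/
noncomputable def quotRing (𝒜 : GRingData Γ R) (I : AddSubgroup R) :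
    GRingData Γ (R ⧸ I) where
  mul x y := QuotientAddGroup.mk (𝒜.mul (Quotient.out x) (Quotient.out y))
  component := fun γ => (𝒜.component γ).map (QuotientAddGroup.mk' I)
  one e := QuotientAddGroup.mk (𝒜.one e)

/-- `R` is a gr-semisimple ring. -/
def GrSemisimpleRing (𝒜 : GRingData Γ R) : Prop := 𝒜.toMod.GrSemisimple

/-- `R` is gr-semilocal: the `Γ`-graded ring `R/rad^gr(R)` is gr-semisimple. -/
noncomputable def GrSemilocal (𝒜 : GRingData Γ R) : Prop :=
  ((𝒜.quotRing 𝒜.toMod.grRad).GrSemisimpleRing)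

end GRingData

namespace StmtAux

open AddSubgroup CategoryTheory

variable {Γ : Type u} [Groupoid.{u} Γ] {R : Type u} [AddCommGroup R]
  (𝒜 : GRingData Γ R)

/-- left multiplication as additive hom -/
def lmulHom (h : 𝒜.IsObjectUnital) (a : R) : R →+ R :=
  AddMonoidHom.mk' (𝒜.mul a) (h.left_distrib a)

def rmulHom (h : 𝒜.IsObjectUnital) (a : R) : R →+ R :=
  AddMonoidHom.mk' (fun b => 𝒜.mul b a) (fun x y => h.right_distrib x y a)

variable (h : 𝒜.IsObjectUnital)
include h

lemma mz (a : R) : 𝒜.mul a 0 = 0 := (lmulHom 𝒜 h a).map_zero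
lemma zm (a : R) : 𝒜.mul 0 a = 0 := (rmulHom 𝒜 h a).map_zero
lemma mneg (a b : R) : 𝒜.mul a (-b) = -(𝒜.mul a b) := (lmulHom 𝒜 h a).map_neg b
lemma negm (a b : R) : 𝒜.mul (-a) b = -(𝒜.mul a b) := (rmulHom 𝒜 h b).map_neg a
lemma msub (a b c : R) : 𝒜.mul a (b - c) = 𝒜.mul a b - 𝒜.mul a c := (lmulHom 𝒜 h a).map_sub b c
lemma subm (a b c : R) : 𝒜.mul (a - b) c = 𝒜.mul a c - 𝒜.mul b c := (rmulHom 𝒜 h c).map_sub a b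
lemma msum {ι : Type*} (a : R) (s : Finset ι) (f : ι → R) :
    𝒜.mul a (∑ i ∈ s, f i) = ∑ i ∈ s, 𝒜.mul a (f i) := map_sum (lmulHom 𝒜 h a) f s
lemma summ {ι : Type*} (a : R) (s : Finset ι) (f : ι → R) :
    𝒜.mul (∑ i ∈ s, f i) a = ∑ i ∈ s, 𝒜.mul (f i) a := map_sum (rmulHom 𝒜 h a) f s

/-! ### homogeneous decompositions and projections -/

open scoped Classical

lemma unique_decomp {s t : Finset (GrIdx Γ)} {cf cg : GrIdx Γ → R}
    (hs : ∀ γ ∈ s, cf γ ∈ 𝒜.component γ.2.2) (ht : ∀ γ ∈ t, cg γ ∈ 𝒜.component γ.2.2)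
    (heq : ∑ γ ∈ s, cf γ = ∑ γ ∈ t, cg γ) (γ : GrIdx Γ) :
    (if γ ∈ s then cf γ else 0) = (if γ ∈ t then cg γ else 0) := by
  classical
  set F : GrIdx Γ → R := fun γ => (if γ ∈ s then cf γ else 0) - (if γ ∈ t then cg γ else 0) with hF
  have h1 : ∀ γ ∈ s ∪ t, F γ ∈ 𝒜.component γ.2.2 := by
    intro γ _
    apply sub_mem <;> split
    · exact hs _ ‹_›
    · exact zero_mem _
    · exact ht _ ‹_›
    · exact zero_mem _
  have h2 : ∑ γ ∈ s ∪ t, F γ = 0 := by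
    rw [hF]
    rw [Finset.sum_sub_distrib, Finset.sum_ite_mem, Finset.sum_ite_mem,
      Finset.union_inter_cancel_left, Finset.union_inter_cancel_right, heq, sub_self]
  by_cases hm : γ ∈ s ∪ t
  · have := h.independent (s ∪ t) F h1 h2 γ hm
    rw [hF] at this
    exact sub_eq_zero.1 this
  · rw [Finset.mem_union] at hm
    push_neg at hm
    rw [if_neg hm.1, if_neg hm.2]

noncomputable def supp (x : R) : Finset (GrIdx Γ) := (h.decompose x).choose

noncomputable def pr (γ : GrIdx Γ) (x : R) : R :=
  if γ ∈ supp 𝒜 h x then (h.decompose x).choose_spec.choose γ else 0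

lemma supp_spec (x : R) :
    (∀ γ ∈ supp 𝒜 h x, (h.decompose x).choose_spec.choose γ ∈ 𝒜.component γ.2.2) ∧
      x = ∑ γ ∈ supp 𝒜 h x, (h.decompose x).choose_spec.choose γ :=
  (h.decompose x).choose_spec.choose_spec

lemma pr_mem (γ : GrIdx Γ) (x : R) : pr 𝒜 h γ x ∈ 𝒜.component γ.2.2 := by
  rw [pr]; split
  · exact (supp_spec 𝒜 h x).1 _ ‹_›
  · exact zero_mem _

lemma pr_homog (γ : GrIdx Γ) (x : R) : 𝒜.toMod.IsHomogeneous (pr 𝒜 h γ x) :=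
  ⟨γ.1, γ.2.1, γ.2.2, pr_mem 𝒜 h γ x⟩

lemma sum_pr (x : R) : ∑ γ ∈ supp 𝒜 h x, pr 𝒜 h γ x = x := by
  rw [Finset.sum_congr rfl (fun γ hγ => by rw [pr, if_pos hγ])]
  exact ((supp_spec 𝒜 h x).2).symm

lemma pr_eq {x : R} {s : Finset (GrIdx Γ)} {cf : GrIdx Γ → R}
    (hs : ∀ γ ∈ s, cf γ ∈ 𝒜.component γ.2.2) (hx : x = ∑ γ ∈ s, cf γ) (γ : GrIdx Γ) :
    pr 𝒜 h γ x = if γ ∈ s then cf γ else 0 := by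
  have := unique_decomp 𝒜 h (s := supp 𝒜 h x) (cf := (h.decompose x).choose_spec.choose)
    (supp_spec 𝒜 h x).1 hs (by rw [← (supp_spec 𝒜 h x).2, hx]) γ
  rw [pr]
  exact this

lemma pr_not_mem_supp {x : R} {γ : GrIdx Γ} (hγ : γ ∉ supp 𝒜 h x) : pr 𝒜 h γ x = 0 := by
  rw [pr, if_neg hγ]

lemma pr_of_mem {x : R} {η : GrIdx Γ} (hx : x ∈ 𝒜.component η.2.2) (γ : GrIdx Γ) :
    pr 𝒜 h γ x = if γ = η then x else 0 := by
  classical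
  have := pr_eq 𝒜 h (s := {η}) (cf := fun _ => x) (fun δ hδ => by
    rw [Finset.mem_singleton] at hδ; subst hδ; exact hx)
    (by rw [Finset.sum_singleton]) γ
  simpa using this

lemma pr_add (γ : GrIdx Γ) (x y : R) :
    pr 𝒜 h γ (x + y) = pr 𝒜 h γ x + pr 𝒜 h γ y := by
  classical
  have key := pr_eq 𝒜 h (x := x + y) (s := supp 𝒜 h x ∪ supp 𝒜 h y)
    (cf := fun γ => pr 𝒜 h γ x + pr 𝒜 h γ y)
    (fun γ _ => add_mem (pr_mem 𝒜 h γ x) (pr_mem 𝒜 h γ y)) ?_ γ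
  · rw [key]
    split
    · rfl
    · rename_i hn
      rw [Finset.mem_union] at hn; push_neg at hn
      rw [pr_not_mem_supp 𝒜 h hn.1, pr_not_mem_supp 𝒜 h hn.2, add_zero]
  · rw [Finset.sum_add_distrib]
    congr 1
    · rw [← Finset.sum_subset (Finset.subset_union_left) (fun γ _ hγ => pr_not_mem_supp 𝒜 h hγ),
        sum_pr]
    · rw [← Finset.sum_subset (Finset.subset_union_right) (fun γ _ hγ => pr_not_mem_supp 𝒜 h hγ),
        sum_pr]

lemma pr_zero (γ : GrIdx Γ) : pr 𝒜 h γ (0 : R) = 0 := by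
  have := pr_eq 𝒜 h (s := (∅ : Finset (GrIdx Γ))) (cf := fun _ => 0)
    (fun δ hδ => by simp at hδ) (Finset.sum_empty (f := fun _ => (0:R))).symm γ
  simpa using this

lemma pr_neg (γ : GrIdx Γ) (x : R) : pr 𝒜 h γ (-x) = -(pr 𝒜 h γ x) := by
  have h0 := pr_add 𝒜 h γ x (-x)
  rw [add_neg_cancel, pr_zero] at h0
  exact (neg_eq_of_add_eq_zero_right h0.symm).symm

noncomputable def prHom (γ : GrIdx Γ) : R →+ R :=
  AddMonoidHom.mk' (fun x => pr 𝒜 h γ x) (pr_add 𝒜 h γ)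

end StmtAux
namespace StmtAux

variable {Γ : Type u} [Groupoid.{u} Γ] {R : Type u} [AddCommGroup R]
  (𝒜 : GRingData Γ R) (h : 𝒜.IsObjectUnital)
include h

open AddSubgroup CategoryTheory

/-- the gradedness condition on an additive subgroup -/
def IsGr (N : AddSubgroup R) : Prop :=
  ∀ n ∈ N, n ∈ closure {x : R | x ∈ N ∧ 𝒜.toMod.IsHomogeneous x}

omit h

lemma isGr_of_isGrSub {N : AddSubgroup R} (hN : 𝒜.toMod.IsGrSub N) : IsGr 𝒜 N := hN.2

lemma isGr_of_isGrLeftIdeal {N : AddSubgroup R} (hN : 𝒜.IsGrLeftIdeal N) : IsGr 𝒜 N := hN.2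

include h

lemma pr_mem_of_gr {N : AddSubgroup R} (hN : IsGr 𝒜 N) {x : R} (hx : x ∈ N) (γ : GrIdx Γ) :
    pr 𝒜 h γ x ∈ N := by
  refine closure_induction (p := fun z _ => pr 𝒜 h γ z ∈ N) ?_ ?_ ?_ ?_ (hN x hx)
  · rintro z ⟨hzN, e, f, δ, hz⟩
    rw [pr_of_mem 𝒜 h (η := ⟨e, f, δ⟩) hz γ]
    split
    · exact hzN
    · exact zero_mem N
  · show pr 𝒜 h γ (0:R) ∈ N
    rw [pr_zero]; exact zero_mem N
  · intro a b _ _ ha hb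
    rw [pr_add]; exact add_mem ha hb
  · intro a _ ha
    rw [pr_neg]; exact neg_mem ha

lemma mem_closure_homog {N : AddSubgroup R} {x : R} (hx : ∀ γ : GrIdx Γ, pr 𝒜 h γ x ∈ N) :
    x ∈ closure {y : R | y ∈ N ∧ 𝒜.toMod.IsHomogeneous y} := by
  rw [← sum_pr 𝒜 h x]
  exact sum_mem (fun γ _ => subset_closure ⟨hx γ, pr_homog 𝒜 h γ x⟩)

lemma isGr_sInf {S : Set (AddSubgroup R)} (hS : ∀ N ∈ S, IsGr 𝒜 N) : IsGr 𝒜 (sInf S) := by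
  intro n hn
  refine mem_closure_homog 𝒜 h (fun γ => ?_)
  rw [AddSubgroup.mem_sInf] at hn ⊢
  exact fun N hN => pr_mem_of_gr 𝒜 h (hS N hN) (hn N hN) γ

lemma isGr_sup {N M : AddSubgroup R} (hN : IsGr 𝒜 N) (hM : IsGr 𝒜 M) : IsGr 𝒜 (N ⊔ M) := by
  intro n hn
  obtain ⟨a, ha, b, hb, rfl⟩ := AddSubgroup.mem_sup.1 hn
  refine mem_closure_homog 𝒜 h (fun γ => ?_)
  rw [pr_add]
  exact AddSubgroup.mem_sup.2 ⟨_, pr_mem_of_gr 𝒜 h hN ha γ, _, pr_mem_of_gr 𝒜 h hM hb γ, rfl⟩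

omit h

/-- right submodule condition -/
def RSub (N : AddSubgroup R) : Prop := ∀ m ∈ N, ∀ a : R, 𝒜.mul m a ∈ N
/-- left submodule condition -/
def LSub (N : AddSubgroup R) : Prop := ∀ m ∈ N, ∀ a : R, 𝒜.mul a m ∈ N

include h

lemma rsub_sup {N M : AddSubgroup R} (hN : RSub 𝒜 N) (hM : RSub 𝒜 M) : RSub 𝒜 (N ⊔ M) := by
  intro m hm a
  obtain ⟨x, hx, y, hy, rfl⟩ := AddSubgroup.mem_sup.1 hm
  exact AddSubgroup.mem_sup.2 ⟨_, hN x hx a, _, hM y hy a, (h.right_distrib x y a).symm⟩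

lemma lsub_sup {N M : AddSubgroup R} (hN : LSub 𝒜 N) (hM : LSub 𝒜 M) : LSub 𝒜 (N ⊔ M) := by
  intro m hm a
  obtain ⟨x, hx, y, hy, rfl⟩ := AddSubgroup.mem_sup.1 hm
  exact AddSubgroup.mem_sup.2 ⟨_, hN x hx a, _, hM y hy a, (h.left_distrib a x y).symm⟩

omit h

lemma isGrSub_iff {N : AddSubgroup R} : 𝒜.toMod.IsGrSub N ↔ RSub 𝒜 N ∧ IsGr 𝒜 N := Iff.rfl

lemma isGrLeftIdeal_iff {N : AddSubgroup R} : 𝒜.IsGrLeftIdeal N ↔ LSub 𝒜 N ∧ IsGr 𝒜 N := Iff.rfl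

end StmtAux
namespace StmtAux

variable {Γ : Type u} [Groupoid.{u} Γ] {R : Type u} [AddCommGroup R]
  (𝒜 : GRingData Γ R) (h : 𝒜.IsObjectUnital)

open AddSubgroup CategoryTheory

omit h
lemma comp_right_cancel {a g h₁ : Γ} {σ τ : a ⟶ g} (δ : g ⟶ h₁) (hh : σ ≫ δ = τ ≫ δ) :
    σ = τ := by
  have := congrArg (fun ρ => ρ ≫ Groupoid.inv δ) hh
  simpa [Category.assoc, Groupoid.comp_inv] using this

lemma comp_left_cancel {g h₁ c : Γ} {σ τ : h₁ ⟶ c} (δ : g ⟶ h₁) (hh : δ ≫ σ = δ ≫ τ) :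
    σ = τ := by
  have := congrArg (fun ρ => Groupoid.inv δ ≫ ρ) hh
  simpa [← Category.assoc, Groupoid.inv_comp] using this

lemma idx_eq_iff_right {a b g h₁ : Γ} (σ : a ⟶ g) (τ : b ⟶ g) (δ : g ⟶ h₁) :
    ((⟨a, h₁, σ ≫ δ⟩ : GrIdx Γ) = ⟨b, h₁, τ ≫ δ⟩) ↔ ((⟨a, g, σ⟩ : GrIdx Γ) = ⟨b, g, τ⟩) := by
  constructor <;> intro hh
  · obtain ⟨ha, h2⟩ := Sigma.mk.inj_iff.1 hh
    subst ha
    obtain ⟨-, h4⟩ := Sigma.mk.inj_iff.1 (eq_of_heq h2)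
    rw [comp_right_cancel δ (eq_of_heq h4)]
  · obtain ⟨ha, h2⟩ := Sigma.mk.inj_iff.1 hh
    subst ha
    obtain ⟨-, h4⟩ := Sigma.mk.inj_iff.1 (eq_of_heq h2)
    rw [eq_of_heq h4]

lemma idx_eq_iff_left {g h₁ c c' : Γ} (σ : h₁ ⟶ c) (τ : h₁ ⟶ c') (δ : g ⟶ h₁) :
    ((⟨g, c, δ ≫ σ⟩ : GrIdx Γ) = ⟨g, c', δ ≫ τ⟩) ↔
      ((⟨h₁, c, σ⟩ : GrIdx Γ) = ⟨h₁, c', τ⟩) := by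
  constructor <;> intro hh
  · obtain ⟨-, h2⟩ := Sigma.mk.inj_iff.1 hh
    obtain ⟨hc, h4⟩ := Sigma.mk.inj_iff.1 (eq_of_heq h2)
    subst hc
    rw [comp_left_cancel δ (eq_of_heq h4)]
  · obtain ⟨-, h2⟩ := Sigma.mk.inj_iff.1 hh
    obtain ⟨hc, h4⟩ := Sigma.mk.inj_iff.1 (eq_of_heq h2)
    subst hc
    rw [eq_of_heq h4]
include h

lemma hom_ext_on (F G : R →+ R)
    (hFG : ∀ (b c : Γ) (τ : b ⟶ c) (w : R), w ∈ 𝒜.component τ → F w = G w) (z : R) :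
    F z = G z := by
  conv_lhs => rw [← sum_pr 𝒜 h z]
  conv_rhs => rw [← sum_pr 𝒜 h z]
  rw [map_sum, map_sum]
  exact Finset.sum_congr rfl (fun γ _ => hFG γ.1 γ.2.1 γ.2.2 _ (pr_mem 𝒜 h γ _))

lemma prA_homog {g h₁ : Γ} {r : R} {δ : g ⟶ h₁} (hr : r ∈ 𝒜.component δ)
    {a : Γ} (σ : a ⟶ g) {b c : Γ} {τ : b ⟶ c} {w : R} (hw : w ∈ 𝒜.component τ) :
    𝒜.mul r (pr 𝒜 h ⟨a, g, σ⟩ w) = pr 𝒜 h ⟨a, h₁, σ ≫ δ⟩ (𝒜.mul r w) := by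
  by_cases hc : c = g
  · subst hc
    have hmem : 𝒜.mul r w ∈ 𝒜.component (τ ≫ δ) := h.mul_mem δ τ hr hw
    rw [pr_of_mem 𝒜 h (η := ⟨b, c, τ⟩) hw, pr_of_mem 𝒜 h (η := ⟨b, h₁, τ ≫ δ⟩) hmem]
    by_cases hx : (⟨a, c, σ⟩ : GrIdx Γ) = ⟨b, c, τ⟩
    · rw [if_pos hx, if_pos ((idx_eq_iff_right σ τ δ).2 hx)]
    · rw [if_neg hx, if_neg (fun hy => hx ((idx_eq_iff_right σ τ δ).1 hy)), mz 𝒜 h]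
  · have h0 : 𝒜.mul r w = 0 := h.mul_eq_zero δ τ hc hr hw
    rw [h0, pr_zero, pr_of_mem 𝒜 h (η := ⟨b, c, τ⟩) hw,
      if_neg (fun hy => hc (congrArg (fun γ : GrIdx Γ => γ.2.1) hy).symm), mz 𝒜 h]

lemma prA {g h₁ : Γ} {r : R} {δ : g ⟶ h₁} (hr : r ∈ 𝒜.component δ)
    {a : Γ} (σ : a ⟶ g) (z : R) :
    𝒜.mul r (pr 𝒜 h ⟨a, g, σ⟩ z) = pr 𝒜 h ⟨a, h₁, σ ≫ δ⟩ (𝒜.mul r z) :=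
  hom_ext_on 𝒜 h ((lmulHom 𝒜 h r).comp (prHom 𝒜 h ⟨a, g, σ⟩))
    ((prHom 𝒜 h ⟨a, h₁, σ ≫ δ⟩).comp (lmulHom 𝒜 h r))
    (fun _ _ τ w hw => prA_homog 𝒜 h hr σ (τ := τ) hw) z

lemma prA_ne {g h₁ : Γ} {r : R} {δ : g ⟶ h₁} (hr : r ∈ 𝒜.component δ)
    {γ : GrIdx Γ} (hγ : γ.2.1 ≠ h₁) (z : R) :
    pr 𝒜 h γ (𝒜.mul r z) = 0 := by
  have key : ∀ (b c : Γ) (τ : b ⟶ c) (w : R), w ∈ 𝒜.component τ →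
      pr 𝒜 h γ (𝒜.mul r w) = 0 := by
    intro b c τ w hw
    by_cases hc : c = g
    · subst hc
      have hmem : 𝒜.mul r w ∈ 𝒜.component (τ ≫ δ) := h.mul_mem δ τ hr hw
      rw [pr_of_mem 𝒜 h (η := ⟨b, h₁, τ ≫ δ⟩) hmem,
        if_neg (fun hy => hγ (congrArg (fun γ : GrIdx Γ => γ.2.1) hy))]
    · rw [h.mul_eq_zero δ τ hc hr hw, pr_zero]
  exact hom_ext_on 𝒜 h ((prHom 𝒜 h γ).comp (lmulHom 𝒜 h r)) 0
    (fun b c τ w hw => key b c τ w hw) z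

lemma prB_homog {g h₁ : Γ} {r : R} {δ : g ⟶ h₁} (hr : r ∈ 𝒜.component δ)
    {c : Γ} (σ : h₁ ⟶ c) {b c' : Γ} {τ : b ⟶ c'} {w : R} (hw : w ∈ 𝒜.component τ) :
    𝒜.mul (pr 𝒜 h ⟨h₁, c, σ⟩ w) r = pr 𝒜 h ⟨g, c, δ ≫ σ⟩ (𝒜.mul w r) := by
  by_cases hb : b = h₁
  · subst hb
    have hmem : 𝒜.mul w r ∈ 𝒜.component (δ ≫ τ) := h.mul_mem τ δ hw hr
    rw [pr_of_mem 𝒜 h (η := ⟨b, c', τ⟩) hw, pr_of_mem 𝒜 h (η := ⟨g, c', δ ≫ τ⟩) hmem]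
    by_cases hx : (⟨b, c, σ⟩ : GrIdx Γ) = ⟨b, c', τ⟩
    · rw [if_pos hx, if_pos ((idx_eq_iff_left σ τ δ).2 hx)]
    · rw [if_neg hx, if_neg (fun hy => hx ((idx_eq_iff_left σ τ δ).1 hy)), zm 𝒜 h]
  · have h0 : 𝒜.mul w r = 0 := h.mul_eq_zero τ δ (fun hy => hb hy.symm) hw hr
    rw [h0, pr_zero, pr_of_mem 𝒜 h (η := ⟨b, c', τ⟩) hw,
      if_neg (fun hy => hb (congrArg (fun γ : GrIdx Γ => γ.1) hy).symm), zm 𝒜 h]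

lemma prB {g h₁ : Γ} {r : R} {δ : g ⟶ h₁} (hr : r ∈ 𝒜.component δ)
    {c : Γ} (σ : h₁ ⟶ c) (z : R) :
    𝒜.mul (pr 𝒜 h ⟨h₁, c, σ⟩ z) r = pr 𝒜 h ⟨g, c, δ ≫ σ⟩ (𝒜.mul z r) :=
  hom_ext_on 𝒜 h ((rmulHom 𝒜 h r).comp (prHom 𝒜 h ⟨h₁, c, σ⟩))
    ((prHom 𝒜 h ⟨g, c, δ ≫ σ⟩).comp (rmulHom 𝒜 h r))
    (fun _ _ τ w hw => prB_homog 𝒜 h hr σ (τ := τ) hw) z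

lemma prB_ne {g h₁ : Γ} {r : R} {δ : g ⟶ h₁} (hr : r ∈ 𝒜.component δ)
    {γ : GrIdx Γ} (hγ : γ.1 ≠ g) (z : R) :
    pr 𝒜 h γ (𝒜.mul z r) = 0 := by
  have key : ∀ (b c : Γ) (τ : b ⟶ c) (w : R), w ∈ 𝒜.component τ →
      pr 𝒜 h γ (𝒜.mul w r) = 0 := by
    intro b c' τ w hw
    by_cases hb : b = h₁
    · subst hb
      have hmem : 𝒜.mul w r ∈ 𝒜.component (δ ≫ τ) := h.mul_mem τ δ hw hr
      rw [pr_of_mem 𝒜 h (η := ⟨g, c', δ ≫ τ⟩) hmem,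
        if_neg (fun hy => hγ (congrArg (fun γ : GrIdx Γ => γ.1) hy))]
    · rw [h.mul_eq_zero τ δ (fun hy => hb hy.symm) hw hr, pr_zero]
  exact hom_ext_on 𝒜 h ((prHom 𝒜 h γ).comp (rmulHom 𝒜 h r)) 0
    (fun b c τ w hw => key b c τ w hw) z

end StmtAux
namespace StmtAux

variable {Γ : Type u} [Groupoid.{u} Γ] {R : Type u} [AddCommGroup R]
  (𝒜 : GRingData Γ R) (h : 𝒜.IsObjectUnital)
include h

open AddSubgroup CategoryTheory

lemma eq_top_right {N : AddSubgroup R} (hr : RSub 𝒜 N) (h1 : ∀ e : Γ, 𝒜.one e ∈ N) :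
    N = ⊤ := by
  rw [eq_top_iff']
  intro x
  rw [← sum_pr 𝒜 h x]
  refine sum_mem (fun γ _ => ?_)
  rw [← h.one_mul γ.2.2 (pr_mem 𝒜 h γ x)]
  exact hr _ (h1 γ.2.1) _

lemma eq_top_left {N : AddSubgroup R} (hl : LSub 𝒜 N) (h1 : ∀ e : Γ, 𝒜.one e ∈ N) :
    N = ⊤ := by
  rw [eq_top_iff']
  intro x
  rw [← sum_pr 𝒜 h x]
  refine sum_mem (fun γ _ => ?_)
  rw [← h.mul_one γ.2.2 (pr_mem 𝒜 h γ x)]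
  exact hl _ (h1 γ.1) _

lemma exists_grmax_right (e : Γ) {N₀ : AddSubgroup R} (h₀ : 𝒜.toMod.IsGrSub N₀)
    (hone : ∀ f : Γ, f ≠ e → 𝒜.one f ∈ N₀) (he : 𝒜.one e ∉ N₀) :
    ∃ N, 𝒜.toMod.IsGrMaximalSub N ∧ N₀ ≤ N := by
  set s : Set (AddSubgroup R) := {N | RSub 𝒜 N ∧ IsGr 𝒜 N ∧ 𝒜.one e ∉ N} with hs
  have hchain : ∀ c ⊆ s, IsChain (· ≤ ·) c → ∀ y ∈ c, ∃ ub ∈ s, ∀ z ∈ c, z ≤ ub := by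
    intro c hcs hch y hy
    have hdir : DirectedOn (· ≤ ·) c := hch.directedOn
    have hne : c.Nonempty := ⟨y, hy⟩
    refine ⟨sSup c, ⟨?_, ?_, ?_⟩, fun z hz => le_sSup hz⟩
    · intro m hm a
      obtain ⟨N, hNc, hmN⟩ := (AddSubgroup.mem_sSup_of_directedOn hne hdir).1 hm
      exact (AddSubgroup.mem_sSup_of_directedOn hne hdir).2 ⟨N, hNc, (hcs hNc).1 m hmN a⟩
    · intro n hn
      obtain ⟨N, hNc, hmN⟩ := (AddSubgroup.mem_sSup_of_directedOn hne hdir).1 hn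
      refine closure_mono ?_ ((hcs hNc).2.1 n hmN)
      exact fun x hx => ⟨(le_sSup hNc) hx.1, hx.2⟩
    · intro hmem
      obtain ⟨N, hNc, hmN⟩ := (AddSubgroup.mem_sSup_of_directedOn hne hdir).1 hmem
      exact (hcs hNc).2.2 hmN
  obtain ⟨m, hm, hmax⟩ := zorn_le_nonempty₀ s hchain N₀ ⟨h₀.1, h₀.2, he⟩
  refine ⟨m, ⟨⟨hmax.1.1, hmax.1.2.1⟩, ?_, ?_⟩, hm⟩
  · intro htop
    exact hmax.1.2.2 (htop ▸ AddSubgroup.mem_top _)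
  · intro L hL hml
    by_cases h1 : 𝒜.one e ∈ L
    · right
      refine eq_top_right 𝒜 h hL.1 (fun f => ?_)
      by_cases hf : f = e
      · subst hf; exact h1
      · exact hml (hm (hone f hf))
    · left
      exact le_antisymm (hmax.2 ⟨hL.1, hL.2, h1⟩ hml) hml

lemma exists_grmax_left (e : Γ) {N₀ : AddSubgroup R} (h₀ : 𝒜.IsGrLeftIdeal N₀)
    (hone : ∀ f : Γ, f ≠ e → 𝒜.one f ∈ N₀) (he : 𝒜.one e ∉ N₀) :
    ∃ N, 𝒜.IsGrMaxLeftIdeal N ∧ N₀ ≤ N := by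
  set s : Set (AddSubgroup R) := {N | LSub 𝒜 N ∧ IsGr 𝒜 N ∧ 𝒜.one e ∉ N} with hs
  have hchain : ∀ c ⊆ s, IsChain (· ≤ ·) c → ∀ y ∈ c, ∃ ub ∈ s, ∀ z ∈ c, z ≤ ub := by
    intro c hcs hch y hy
    have hdir : DirectedOn (· ≤ ·) c := hch.directedOn
    have hne : c.Nonempty := ⟨y, hy⟩
    refine ⟨sSup c, ⟨?_, ?_, ?_⟩, fun z hz => le_sSup hz⟩
    · intro m hm a
      obtain ⟨N, hNc, hmN⟩ := (AddSubgroup.mem_sSup_of_directedOn hne hdir).1 hm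
      exact (AddSubgroup.mem_sSup_of_directedOn hne hdir).2 ⟨N, hNc, (hcs hNc).1 m hmN a⟩
    · intro n hn
      obtain ⟨N, hNc, hmN⟩ := (AddSubgroup.mem_sSup_of_directedOn hne hdir).1 hn
      refine closure_mono ?_ ((hcs hNc).2.1 n hmN)
      exact fun x hx => ⟨(le_sSup hNc) hx.1, hx.2⟩
    · intro hmem
      obtain ⟨N, hNc, hmN⟩ := (AddSubgroup.mem_sSup_of_directedOn hne hdir).1 hmem
      exact (hcs hNc).2.2 hmN
  obtain ⟨m, hm, hmax⟩ := zorn_le_nonempty₀ s hchain N₀ ⟨h₀.1, h₀.2, he⟩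
  refine ⟨m, ⟨⟨hmax.1.1, hmax.1.2.1⟩, ?_, ?_⟩, hm⟩
  · intro htop
    exact hmax.1.2.2 (htop ▸ AddSubgroup.mem_top _)
  · intro L hL hml
    by_cases h1 : 𝒜.one e ∈ L
    · right
      refine eq_top_left 𝒜 h hL.1 (fun f => ?_)
      by_cases hf : f = e
      · subst hf; exact h1
      · exact hml (hm (hone f hf))
    · left
      exact le_antisymm (hmax.2 ⟨hL.1, hL.2, h1⟩ hml) hml

/-- the principal right ideal `xR` -/
def rId (x : R) : AddSubgroup R where
  carrier := {z | ∃ r, z = 𝒜.mul x r}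
  zero_mem' := ⟨0, (mz 𝒜 h x).symm⟩
  add_mem' := by
    rintro a b ⟨r1, rfl⟩ ⟨r2, rfl⟩
    exact ⟨r1 + r2, (h.left_distrib x r1 r2).symm⟩
  neg_mem' := by
    rintro a ⟨r, rfl⟩
    exact ⟨-r, (mneg 𝒜 h x r).symm⟩

/-- the principal left ideal `Rx` -/
def lId (x : R) : AddSubgroup R where
  carrier := {z | ∃ r, z = 𝒜.mul r x}
  zero_mem' := ⟨0, (zm 𝒜 h x).symm⟩
  add_mem' := by
    rintro a b ⟨r1, rfl⟩ ⟨r2, rfl⟩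
    exact ⟨r1 + r2, (h.right_distrib r1 r2 x).symm⟩
  neg_mem' := by
    rintro a ⟨r, rfl⟩
    exact ⟨-r, (negm 𝒜 h r x).symm⟩

lemma mem_rId_self {e f : Γ} (σ : e ⟶ f) {x : R} (hx : x ∈ 𝒜.component σ) :
    x ∈ rId 𝒜 h x := ⟨𝒜.one e, (h.mul_one σ hx).symm⟩

lemma mem_lId_self {e f : Γ} (σ : e ⟶ f) {x : R} (hx : x ∈ 𝒜.component σ) :
    x ∈ lId 𝒜 h x := ⟨𝒜.one f, (h.one_mul σ hx).symm⟩

lemma rsub_rId (x : R) : RSub 𝒜 (rId 𝒜 h x) := by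
  rintro m ⟨r, rfl⟩ a
  exact ⟨𝒜.mul r a, h.mul_assoc x r a⟩

lemma lsub_lId (x : R) : LSub 𝒜 (lId 𝒜 h x) := by
  rintro m ⟨r, rfl⟩ a
  exact ⟨𝒜.mul a r, (h.mul_assoc a r x).symm⟩

lemma isGr_rId {e f : Γ} (σ : e ⟶ f) {x : R} (hx : x ∈ 𝒜.component σ) :
    IsGr 𝒜 (rId 𝒜 h x) := by
  rintro z ⟨r, rfl⟩
  refine mem_closure_homog 𝒜 h (fun γ => ?_)
  obtain ⟨a, b, ρ⟩ := γ
  by_cases hb : b = f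
  · subst hb
    have := prA 𝒜 h (δ := σ) hx (σ := ρ ≫ Groupoid.inv σ) r
    rw [Category.assoc, Groupoid.inv_comp, Category.comp_id] at this
    exact ⟨_, this.symm⟩
  · rw [prA_ne 𝒜 h hx (γ := ⟨a, b, ρ⟩) hb r]
    exact zero_mem _

lemma isGr_lId {e f : Γ} (σ : e ⟶ f) {x : R} (hx : x ∈ 𝒜.component σ) :
    IsGr 𝒜 (lId 𝒜 h x) := by
  rintro z ⟨r, rfl⟩
  refine mem_closure_homog 𝒜 h (fun γ => ?_)
  obtain ⟨a, b, ρ⟩ := γ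
  by_cases ha : a = e
  · subst ha
    have := prB 𝒜 h (δ := σ) hx (σ := Groupoid.inv σ ≫ ρ) r
    rw [← Category.assoc, Groupoid.comp_inv, Category.id_comp] at this
    exact ⟨_, this.symm⟩
  · rw [prB_ne 𝒜 h hx (γ := ⟨a, b, ρ⟩) ha r]
    exact zero_mem _

lemma L1r {N : AddSubgroup R} (hmax : 𝒜.toMod.IsGrMaximalSub N) {e : Γ} {x : R}
    (hx : x ∈ 𝒜.component (𝟙 e)) (hxN : x ∉ N) :
    ∃ s ∈ 𝒜.component (𝟙 e), 𝒜.one e - 𝒜.mul x s ∈ N := by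
  obtain ⟨⟨hNr, hNg⟩, hNt, hNmax⟩ := hmax
  have hPgr : 𝒜.toMod.IsGrSub (N ⊔ rId 𝒜 h x) :=
    ⟨rsub_sup 𝒜 h hNr (rsub_rId 𝒜 h x), isGr_sup 𝒜 h hNg (isGr_rId 𝒜 h (𝟙 e) hx)⟩
  have hxP : x ∈ N ⊔ rId 𝒜 h x := SetLike.le_def.1 le_sup_right (mem_rId_self 𝒜 h (𝟙 e) hx)
  have hPtop : N ⊔ rId 𝒜 h x = ⊤ := by
    rcases hNmax _ hPgr le_sup_left with h1 | h1
    · exact absurd (h1 ▸ hxP) hxN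
    · exact h1
  have h1P : 𝒜.one e ∈ N ⊔ rId 𝒜 h x := hPtop ▸ AddSubgroup.mem_top _
  obtain ⟨n, hn, w, ⟨r, rfl⟩, heq⟩ := AddSubgroup.mem_sup.1 h1P
  have hpr := congrArg (pr 𝒜 h ⟨e, e, 𝟙 e⟩) heq
  rw [pr_add, pr_of_mem 𝒜 h (η := ⟨e, e, 𝟙 e⟩) (h.one_mem e), if_pos rfl] at hpr
  have hprA := prA 𝒜 h (δ := 𝟙 e) hx (σ := 𝟙 e) r
  rw [Category.id_comp] at hprA
  rw [← hprA] at hpr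
  refine ⟨pr 𝒜 h ⟨e, e, 𝟙 e⟩ r, pr_mem 𝒜 h ⟨e, e, 𝟙 e⟩ r, ?_⟩
  have heq2 : 𝒜.one e - 𝒜.mul x (pr 𝒜 h ⟨e, e, 𝟙 e⟩ r) = pr 𝒜 h ⟨e, e, 𝟙 e⟩ n := by
    rw [← hpr]; abel
  rw [heq2]
  exact pr_mem_of_gr 𝒜 h hNg hn _

lemma L1l {N : AddSubgroup R} (hmax : 𝒜.IsGrMaxLeftIdeal N) {e : Γ} {x : R}
    (hx : x ∈ 𝒜.component (𝟙 e)) (hxN : x ∉ N) :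
    ∃ s ∈ 𝒜.component (𝟙 e), 𝒜.one e - 𝒜.mul s x ∈ N := by
  obtain ⟨⟨hNl, hNg⟩, hNt, hNmax⟩ := hmax
  have hPgr : 𝒜.IsGrLeftIdeal (N ⊔ lId 𝒜 h x) :=
    ⟨lsub_sup 𝒜 h hNl (lsub_lId 𝒜 h x), isGr_sup 𝒜 h hNg (isGr_lId 𝒜 h (𝟙 e) hx)⟩
  have hxP : x ∈ N ⊔ lId 𝒜 h x := SetLike.le_def.1 le_sup_right (mem_lId_self 𝒜 h (𝟙 e) hx)
  have hPtop : N ⊔ lId 𝒜 h x = ⊤ := by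
    rcases hNmax _ hPgr le_sup_left with h1 | h1
    · exact absurd (h1 ▸ hxP) hxN
    · exact h1
  have h1P : 𝒜.one e ∈ N ⊔ lId 𝒜 h x := hPtop ▸ AddSubgroup.mem_top _
  obtain ⟨n, hn, w, ⟨r, rfl⟩, heq⟩ := AddSubgroup.mem_sup.1 h1P
  have hpr := congrArg (pr 𝒜 h ⟨e, e, 𝟙 e⟩) heq
  rw [pr_add, pr_of_mem 𝒜 h (η := ⟨e, e, 𝟙 e⟩) (h.one_mem e), if_pos rfl] at hpr
  have hprB := prB 𝒜 h (δ := 𝟙 e) hx (σ := 𝟙 e) r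
  rw [Category.id_comp] at hprB
  rw [← hprB] at hpr
  refine ⟨pr 𝒜 h ⟨e, e, 𝟙 e⟩ r, pr_mem 𝒜 h ⟨e, e, 𝟙 e⟩ r, ?_⟩
  have heq2 : 𝒜.one e - 𝒜.mul (pr 𝒜 h ⟨e, e, 𝟙 e⟩ r) x = pr 𝒜 h ⟨e, e, 𝟙 e⟩ n := by
    rw [← hpr]; abel
  rw [heq2]
  exact pr_mem_of_gr 𝒜 h hNg hn _

end StmtAux
namespace StmtAux

variable {Γ : Type u} [Groupoid.{u} Γ] {R : Type u} [AddCommGroup R]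
  (𝒜 : GRingData Γ R) (h : 𝒜.IsObjectUnital)
include h

open AddSubgroup CategoryTheory

lemma absr {N : AddSubgroup R} (hmax : 𝒜.toMod.IsGrMaximalSub N)
    {g h₁ : Γ} {δ : g ⟶ h₁} {r : R} (hr : r ∈ 𝒜.component δ)
    {x : R} (hx : x ∈ 𝒜.toMod.grRad) : 𝒜.mul r x ∈ N := by
  obtain ⟨⟨hNr, hNg⟩, hNt, hNmax⟩ := hmax
  set K : AddSubgroup R := AddSubgroup.comap (lmulHom 𝒜 h r) N with hK
  have hKmem : ∀ z : R, z ∈ K ↔ 𝒜.mul r z ∈ N := fun z => Iff.rfl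
  have hKr : RSub 𝒜 K := by
    intro m hm a
    rw [hKmem] at hm ⊢
    rw [← h.mul_assoc r m a]
    exact hNr _ hm a
  have hKg : IsGr 𝒜 K := by
    intro z hz
    refine mem_closure_homog 𝒜 h (fun γ => ?_)
    obtain ⟨a, b, ρ⟩ := γ
    rw [hKmem]
    by_cases hb : b = g
    · subst hb
      rw [prA 𝒜 h hr ρ z]
      exact pr_mem_of_gr 𝒜 h hNg hz _
    · rw [h.mul_eq_zero δ ρ hb hr (pr_mem 𝒜 h ⟨a, b, ρ⟩ z)]
      exact zero_mem N
  by_cases hKt : K = ⊤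
  · exact (hKmem x).1 (hKt ▸ AddSubgroup.mem_top x)
  have hKmax : 𝒜.toMod.IsGrMaximalSub K := by
    refine ⟨⟨hKr, hKg⟩, hKt, ?_⟩
    intro L hL hKL
    by_cases hLK : L = K
    · left; exact hLK
    right
    have hex : ∃ x₀ ∈ L, x₀ ∉ K := by
      by_contra hc; push_neg at hc
      exact hLK (le_antisymm hc hKL)
    obtain ⟨x₀, hx₀L, hx₀K⟩ := hex
    have hPr : RSub 𝒜 (N ⊔ AddSubgroup.map (lmulHom 𝒜 h r) L) := by
      refine rsub_sup 𝒜 h hNr ?_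
      rintro m ⟨l, hl, rfl⟩ a
      exact ⟨𝒜.mul l a, hL.1 l hl a, (h.mul_assoc r l a).symm⟩
    have hPg : IsGr 𝒜 (N ⊔ AddSubgroup.map (lmulHom 𝒜 h r) L) := by
      refine isGr_sup 𝒜 h hNg ?_
      rintro m ⟨l, hl, rfl⟩
      refine mem_closure_homog 𝒜 h (fun γ => ?_)
      obtain ⟨a, b, ρ⟩ := γ
      show pr 𝒜 h ⟨a, b, ρ⟩ (𝒜.mul r l) ∈ _
      by_cases hb : b = h₁
      · subst hb
        have hA := prA 𝒜 h hr (σ := ρ ≫ Groupoid.inv δ) l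
        rw [Category.assoc, Groupoid.inv_comp, Category.comp_id] at hA
        rw [← hA]
        exact ⟨_, pr_mem_of_gr 𝒜 h hL.2 hl _, rfl⟩
      · rw [prA_ne 𝒜 h hr (γ := ⟨a, b, ρ⟩) hb l]
        exact zero_mem _
    have hPtop : N ⊔ AddSubgroup.map (lmulHom 𝒜 h r) L = ⊤ := by
      rcases hNmax _ ⟨hPr, hPg⟩ le_sup_left with h1 | h1
      · exfalso
        have hm : 𝒜.mul r x₀ ∈ N ⊔ AddSubgroup.map (lmulHom 𝒜 h r) L :=
          SetLike.le_def.1 le_sup_right (AddSubgroup.mem_map_of_mem _ hx₀L)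
        rw [h1] at hm
        exact hx₀K hm
      · exact h1
    rw [eq_top_iff']
    intro z
    have hz : 𝒜.mul r z ∈ N ⊔ AddSubgroup.map (lmulHom 𝒜 h r) L :=
      hPtop ▸ AddSubgroup.mem_top _
    obtain ⟨n, hn, w, ⟨l, hl, rfl⟩, heq⟩ := AddSubgroup.mem_sup.1 hz
    have heq' : n + 𝒜.mul r l = 𝒜.mul r z := heq
    have hzl : z - l ∈ K := by
      rw [hKmem, msub 𝒜 h r z l]
      have heq2 : 𝒜.mul r z - 𝒜.mul r l = n := by rw [← heq']; abel
      rw [heq2]; exact hn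
    have hzL : z = (z - l) + l := by abel
    rw [hzL]
    exact add_mem (hKL hzl) hl
  have hle : 𝒜.toMod.grRad ≤ K := sInf_le hKmax
  exact hle hx

lemma absl {N : AddSubgroup R} (hmax : 𝒜.IsGrMaxLeftIdeal N)
    {g h₁ : Γ} {δ : g ⟶ h₁} {r : R} (hr : r ∈ 𝒜.component δ)
    {x : R} (hx : x ∈ 𝒜.lRad) : 𝒜.mul x r ∈ N := by
  obtain ⟨⟨hNl, hNg⟩, hNt, hNmax⟩ := hmax
  set K : AddSubgroup R := AddSubgroup.comap (rmulHom 𝒜 h r) N with hK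
  have hKmem : ∀ z : R, z ∈ K ↔ 𝒜.mul z r ∈ N := fun z => Iff.rfl
  have hKl : LSub 𝒜 K := by
    intro m hm a
    rw [hKmem] at hm ⊢
    rw [h.mul_assoc a m r]
    exact hNl _ hm a
  have hKg : IsGr 𝒜 K := by
    intro z hz
    refine mem_closure_homog 𝒜 h (fun γ => ?_)
    obtain ⟨a, b, ρ⟩ := γ
    rw [hKmem]
    by_cases ha : a = h₁
    · subst ha
      rw [prB 𝒜 h hr ρ z]
      exact pr_mem_of_gr 𝒜 h hNg hz _
    · rw [h.mul_eq_zero ρ δ (fun hy => ha hy.symm) (pr_mem 𝒜 h ⟨a, b, ρ⟩ z) hr]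
      exact zero_mem N
  by_cases hKt : K = ⊤
  · exact (hKmem x).1 (hKt ▸ AddSubgroup.mem_top x)
  have hKmax : 𝒜.IsGrMaxLeftIdeal K := by
    refine ⟨⟨hKl, hKg⟩, hKt, ?_⟩
    intro L hL hKL
    by_cases hLK : L = K
    · left; exact hLK
    right
    have hex : ∃ x₀ ∈ L, x₀ ∉ K := by
      by_contra hc; push_neg at hc
      exact hLK (le_antisymm hc hKL)
    obtain ⟨x₀, hx₀L, hx₀K⟩ := hex
    have hPl : LSub 𝒜 (N ⊔ AddSubgroup.map (rmulHom 𝒜 h r) L) := by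
      refine lsub_sup 𝒜 h hNl ?_
      rintro m ⟨l, hl, rfl⟩ a
      exact ⟨𝒜.mul a l, hL.1 l hl a, h.mul_assoc a l r⟩
    have hPg : IsGr 𝒜 (N ⊔ AddSubgroup.map (rmulHom 𝒜 h r) L) := by
      refine isGr_sup 𝒜 h hNg ?_
      rintro m ⟨l, hl, rfl⟩
      refine mem_closure_homog 𝒜 h (fun γ => ?_)
      obtain ⟨a, b, ρ⟩ := γ
      show pr 𝒜 h ⟨a, b, ρ⟩ (𝒜.mul l r) ∈ _
      by_cases ha : a = g
      · subst ha
        have hB := prB 𝒜 h hr (σ := Groupoid.inv δ ≫ ρ) l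
        rw [← Category.assoc, Groupoid.comp_inv, Category.id_comp] at hB
        rw [← hB]
        exact ⟨_, pr_mem_of_gr 𝒜 h hL.2 hl _, rfl⟩
      · rw [prB_ne 𝒜 h hr (γ := ⟨a, b, ρ⟩) ha l]
        exact zero_mem _
    have hPtop : N ⊔ AddSubgroup.map (rmulHom 𝒜 h r) L = ⊤ := by
      rcases hNmax _ ⟨hPl, hPg⟩ le_sup_left with h1 | h1
      · exfalso
        have hm : 𝒜.mul x₀ r ∈ N ⊔ AddSubgroup.map (rmulHom 𝒜 h r) L :=
          SetLike.le_def.1 le_sup_right (AddSubgroup.mem_map_of_mem _ hx₀L)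
        rw [h1] at hm
        exact hx₀K hm
      · exact h1
    rw [eq_top_iff']
    intro z
    have hz : 𝒜.mul z r ∈ N ⊔ AddSubgroup.map (rmulHom 𝒜 h r) L :=
      hPtop ▸ AddSubgroup.mem_top _
    obtain ⟨n, hn, w, ⟨l, hl, rfl⟩, heq⟩ := AddSubgroup.mem_sup.1 hz
    have heq' : n + 𝒜.mul l r = 𝒜.mul z r := heq
    have hzl : z - l ∈ K := by
      rw [hKmem, subm 𝒜 h z l r]
      have heq2 : 𝒜.mul z r - 𝒜.mul l r = n := by rw [← heq']; abel
      rw [heq2]; exact hn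
    have hzL : z = (z - l) + l := by abel
    rw [hzL]
    exact add_mem (hKL hzl) hl
  have hle : 𝒜.lRad ≤ K := sInf_le hKmax
  exact hle hx

lemma grRad_isGrIdeal : 𝒜.IsGrIdeal 𝒜.toMod.grRad := by
  refine ⟨⟨?_, ?_⟩, ?_⟩
  · intro m hm a
    rw [GModData.grRad, AddSubgroup.mem_sInf] at hm ⊢
    exact fun N hN => hN.1.1 m (hm N hN) a
  · exact isGr_sInf 𝒜 h (fun N hN => hN.1.2)
  · intro m hm a
    rw [GModData.grRad, AddSubgroup.mem_sInf]
    intro N hN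
    have hsum : 𝒜.mul a m = ∑ γ ∈ supp 𝒜 h a, 𝒜.mul (pr 𝒜 h γ a) m := by
      rw [← summ 𝒜 h m, sum_pr]
    rw [hsum]
    exact sum_mem (fun γ _ => absr 𝒜 h hN (pr_mem 𝒜 h γ a) hm)

lemma lRad_isGrIdeal : 𝒜.IsGrIdeal 𝒜.lRad := by
  refine ⟨⟨?_, ?_⟩, ?_⟩
  · intro m hm a
    show 𝒜.mul m a ∈ 𝒜.lRad
    rw [GRingData.lRad, AddSubgroup.mem_sInf]
    intro N hN
    have hsum : 𝒜.mul m a = ∑ γ ∈ supp 𝒜 h a, 𝒜.mul m (pr 𝒜 h γ a) := by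
      rw [← msum 𝒜 h m, sum_pr]
    rw [hsum]
    exact sum_mem (fun γ _ => absl 𝒜 h hN (pr_mem 𝒜 h γ a) hm)
  · exact isGr_sInf 𝒜 h (fun N hN => hN.1.2)
  · intro m hm a
    rw [GRingData.lRad, AddSubgroup.mem_sInf] at hm ⊢
    exact fun N hN => hN.1.1 m (hm N hN) a

end StmtAux
namespace StmtAux

section RingLemmas

variable {A : Type*} [Ring A]

lemma unit_of_left_inv_all {x : A} (H : ∀ y : A, ∃ z, z * (1 + y * x) = 1) (y : A) :
    IsUnit (1 + y * x) := by
  obtain ⟨z, hz⟩ := H y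
  have hz' : z = 1 + -(z * y) * x := by
    have h1 : z + z * (y * x) = 1 := by rw [← hz]; noncomm_ring
    rw [show (1 + -(z * y) * x : A) = 1 - z * (y * x) by noncomm_ring]
    exact eq_sub_of_add_eq h1
  obtain ⟨w, hw⟩ := H (-(z * y))
  rw [← hz'] at hw
  have hw1 : w = 1 + y * x := by
    calc w = w * (z * (1 + y * x)) := by rw [hz, mul_one]
    _ = (w * z) * (1 + y * x) := by rw [mul_assoc]
    _ = 1 + y * x := by rw [hw, one_mul]
  exact ⟨⟨1 + y * x, z, by rw [← hw1]; exact hw, hz⟩, rfl⟩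

lemma unit_of_right_inv_all {x : A} (H : ∀ y : A, ∃ z, (1 + x * y) * z = 1) (y : A) :
    IsUnit (1 + x * y) := by
  obtain ⟨z, hz⟩ := H y
  have hz' : z = 1 + x * -(y * z) := by
    have h1 : z + x * y * z = 1 := by rw [← hz]; noncomm_ring
    rw [show (1 + x * -(y * z) : A) = 1 - x * y * z by noncomm_ring]
    exact eq_sub_of_add_eq (by rw [add_comm] at h1 ⊢; exact h1)
  obtain ⟨w, hw⟩ := H (-(y * z))
  rw [← hz'] at hw
  have hw1 : w = 1 + x * y := by
    calc w = ((1 + x * y) * z) * w := by rw [hz, one_mul]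
    _ = (1 + x * y) * (z * w) := by rw [mul_assoc]
    _ = 1 + x * y := by rw [hw, mul_one]
  exact ⟨⟨1 + x * y, z, hz, by rw [← hw1]; exact hw⟩, rfl⟩

lemma unit_swap {a b : A} (H : IsUnit (1 + a * b)) : IsUnit (1 + b * a) := by
  obtain ⟨u, hu⟩ := H
  have h1 : (1 + a * b) * ↑u⁻¹ = 1 := by rw [← hu]; exact u.mul_inv
  have h2 : (↑u⁻¹ : A) * (1 + a * b) = 1 := by rw [← hu]; exact u.inv_mul
  refine ⟨⟨1 + b * a, 1 - b * ↑u⁻¹ * a, ?_, ?_⟩, rfl⟩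
  · calc (1 + b * a) * (1 - b * ↑u⁻¹ * a)
        = 1 + b * a - b * ((1 + a * b) * ↑u⁻¹) * a := by noncomm_ring
    _ = 1 := by rw [h1]; noncomm_ring
  · calc (1 - b * ↑u⁻¹ * a) * (1 + b * a)
        = 1 + b * a - b * (↑u⁻¹ * (1 + a * b)) * a := by noncomm_ring
    _ = 1 := by rw [h2]; noncomm_ring

lemma mem_jacobson_bot_iff' {x : A} :
    x ∈ Ideal.jacobson (⊥ : Ideal A) ↔ ∀ y : A, IsUnit (1 + y * x) := by
  rw [Ideal.mem_jacobson_iff]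
  constructor
  · intro H
    apply unit_of_left_inv_all
    intro y
    obtain ⟨z, hz⟩ := H y
    rw [Ideal.mem_bot, sub_eq_zero] at hz
    refine ⟨z, ?_⟩
    rw [mul_add, mul_one, ← mul_assoc, add_comm]
    exact hz
  · intro H y
    obtain ⟨u, hu⟩ := H y
    refine ⟨↑u⁻¹, ?_⟩
    have h2 : (↑u⁻¹ : A) * (1 + y * x) = 1 := by rw [← hu]; exact u.inv_mul
    rw [Ideal.mem_bot]
    have : (↑u⁻¹ : A) * y * x + ↑u⁻¹ - 1 = ↑u⁻¹ * (1 + y * x) - 1 := by noncomm_ring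
    rw [this, h2, sub_self]

end RingLemmas

end StmtAux
namespace StmtAux

open AddSubgroup CategoryTheory

variable {Γ : Type u} [Groupoid.{u} Γ] {R : Type u} [AddCommGroup R]

/-- the unital ring `R_e`, `e ∈ Γ₀`, as a standalone type -/
structure Re (𝒜 : GRingData Γ R) (h : 𝒜.IsObjectUnital) (e : Γ) : Type u where
  val : R
  mem : val ∈ 𝒜.component (𝟙 e)

variable (𝒜 : GRingData Γ R) (h : 𝒜.IsObjectUnital)

lemma rext {e : Γ} {a b : Re 𝒜 h e} (hv : a.val = b.val) : a = b := by
  cases a; cases b; cases hv; rfl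

include h in
lemma mulmem_e {e : Γ} {a b : R} (ha : a ∈ 𝒜.component (𝟙 e))
    (hb : b ∈ 𝒜.component (𝟙 e)) : 𝒜.mul a b ∈ 𝒜.component (𝟙 e) := by
  have := h.mul_mem (𝟙 e) (𝟙 e) ha hb
  rwa [Category.comp_id] at this

instance reZero (e : Γ) : Zero (Re 𝒜 h e) := ⟨⟨0, zero_mem _⟩⟩
instance reAdd (e : Γ) : Add (Re 𝒜 h e) :=
  ⟨fun a b => ⟨a.val + b.val, add_mem a.mem b.mem⟩⟩
instance reNeg (e : Γ) : Neg (Re 𝒜 h e) := ⟨fun a => ⟨-a.val, neg_mem a.mem⟩⟩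

instance reRing (e : Γ) : Ring (Re 𝒜 h e) where
  add a b := a + b
  add_assoc a b c := rext 𝒜 h (add_assoc _ _ _)
  zero := 0
  zero_add a := rext 𝒜 h (zero_add _)
  add_zero a := rext 𝒜 h (add_zero _)
  add_comm a b := rext 𝒜 h (add_comm _ _)
  neg a := -a
  nsmul := nsmulRec
  zsmul := zsmulRec
  neg_add_cancel a := rext 𝒜 h (neg_add_cancel _)
  mul a b := ⟨𝒜.mul a.val b.val, mulmem_e 𝒜 h a.mem b.mem⟩
  mul_assoc a b c := rext 𝒜 h (h.mul_assoc _ _ _)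
  one := ⟨𝒜.one e, h.one_mem e⟩
  one_mul a := rext 𝒜 h (h.one_mul (𝟙 e) a.mem)
  mul_one a := rext 𝒜 h (h.mul_one (𝟙 e) a.mem)
  left_distrib a b c := rext 𝒜 h (h.left_distrib _ _ _)
  right_distrib a b c := rext 𝒜 h (h.right_distrib _ _ _)
  zero_mul a := rext 𝒜 h (zm 𝒜 h _)
  mul_zero a := rext 𝒜 h (mz 𝒜 h _)

variable {e : Γ}

lemma val_mul (a b : Re 𝒜 h e) : (a * b).val = 𝒜.mul a.val b.val := rfl
lemma val_add (a b : Re 𝒜 h e) : (a + b).val = a.val + b.val := rfl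
lemma val_one : (1 : Re 𝒜 h e).val = 𝒜.one e := rfl
lemma val_zero : (0 : Re 𝒜 h e).val = 0 := rfl
lemma val_neg (a : Re 𝒜 h e) : (-a).val = -a.val := rfl
lemma val_sub (a b : Re 𝒜 h e) : (a - b).val = a.val - b.val := by
  show (a + -b).val = _
  rw [val_add, val_neg, ← sub_eq_add_neg]

include h

lemma radIn_facts (e : Γ) :
    (∀ x ∈ 𝒜.radIn e, ∀ s ∈ 𝒜.component (𝟙 e),
      (∃ u ∈ 𝒜.component (𝟙 e),
        𝒜.mul (𝒜.one e - 𝒜.mul x s) u = 𝒜.one e ∧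
        𝒜.mul u (𝒜.one e - 𝒜.mul x s) = 𝒜.one e) ∧
      (∃ u ∈ 𝒜.component (𝟙 e),
        𝒜.mul (𝒜.one e - 𝒜.mul s x) u = 𝒜.one e ∧
        𝒜.mul u (𝒜.one e - 𝒜.mul s x) = 𝒜.one e)) ∧
    (∀ x ∈ 𝒜.component (𝟙 e),
      (∀ s ∈ 𝒜.component (𝟙 e), ∃ u ∈ 𝒜.component (𝟙 e),
        𝒜.mul (𝒜.one e - 𝒜.mul x s) u = 𝒜.one e) → x ∈ 𝒜.radIn e) ∧
    (∀ x ∈ 𝒜.component (𝟙 e),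
      (∀ s ∈ 𝒜.component (𝟙 e), ∃ u ∈ 𝒜.component (𝟙 e),
        𝒜.mul u (𝒜.one e - 𝒜.mul s x) = 𝒜.one e) → x ∈ 𝒜.radIn e) := by
  -- ideals from left ideal sets
  have mkIdl : ∀ N : Set R, 𝒜.IsLeftIdealIn e N →
      ∃ I : Ideal (Re 𝒜 h e), ∀ a : Re 𝒜 h e, a ∈ I ↔ a.val ∈ N := by
    intro N hN
    refine ⟨{ carrier := {a : Re 𝒜 h e | a.val ∈ N},
              add_mem' := ?_, zero_mem' := ?_, smul_mem' := ?_ }, fun a => Iff.rfl⟩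
    · intro a b ha hb
      have h1 : (0:R) - b.val ∈ N := hN.2.2.1 0 hN.2.1 b.val hb
      have h2 : a.val - ((0:R) - b.val) ∈ N := hN.2.2.1 _ ha _ h1
      have h3 : a.val - ((0:R) - b.val) = a.val + b.val := by abel
      show (a + b).val ∈ N
      rw [val_add, ← h3]
      exact h2
    · show (0 : Re 𝒜 h e).val ∈ N
      rw [val_zero]
      exact hN.2.1
    · intro c a ha
      show (c * a).val ∈ N
      rw [val_mul]
      exact hN.2.2.2 _ c.mem _ ha
  -- left ideal sets from ideals
  have idlSet : ∀ I : Ideal (Re 𝒜 h e), 𝒜.IsLeftIdealIn e (Re.val '' (I : Set (Re 𝒜 h e))) := by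
    intro I
    refine ⟨?_, ⟨0, I.zero_mem, val_zero 𝒜 h⟩, ?_, ?_⟩
    · rintro x ⟨a, haI, rfl⟩; exact a.mem
    · rintro x ⟨a, ha, rfl⟩ y ⟨b, hb, rfl⟩
      exact ⟨a - b, sub_mem ha hb, val_sub 𝒜 h a b⟩
    · intro r hr x hx
      obtain ⟨a, ha, rfl⟩ := hx
      exact ⟨⟨r, hr⟩ * a, I.mul_mem_left ⟨r, hr⟩ ha, val_mul 𝒜 h _ _⟩
  have maxIn_of : ∀ I : Ideal (Re 𝒜 h e), I.IsMaximal →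
      𝒜.IsMaxLeftIdealIn e (Re.val '' (I : Set (Re 𝒜 h e))) := by
    intro I hI
    refine ⟨idlSet I, ?_, ?_⟩
    · intro hEq
      have h1 : (𝒜.one e) ∈ Re.val '' (I : Set (Re 𝒜 h e)) := by
        rw [hEq]; exact h.one_mem e
      obtain ⟨a, haI, hav⟩ := h1
      have ha1 : a = (1 : Re 𝒜 h e) := rext 𝒜 h (by rw [hav, val_one])
      exact hI.ne_top ((Ideal.eq_top_iff_one I).2 (ha1 ▸ haI))
    · intro L hL hNL
      obtain ⟨J, hJ⟩ := mkIdl L hL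
      have hIJ : I ≤ J := fun a ha => (hJ a).2 (hNL ⟨a, ha, rfl⟩)
      by_cases hJtop : J = ⊤
      · right
        refine Set.Subset.antisymm hL.1 (fun x hx => ?_)
        exact (hJ ⟨x, hx⟩).1 (hJtop ▸ Submodule.mem_top)
      · left
        have hJI : J = I := by
          by_contra hne
          exact hJtop (hI.1.2 J (lt_of_le_of_ne hIJ (Ne.symm hne)))
        refine Set.Subset.antisymm (fun x hxL => ?_) hNL
        have hxC : x ∈ 𝒜.component (𝟙 e) := hL.1 hxL
        have hxJ : (⟨x, hxC⟩ : Re 𝒜 h e) ∈ J := (hJ _).2 hxL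
        rw [hJI] at hxJ
        exact ⟨_, hxJ, rfl⟩
  have maxIdl_of : ∀ N : Set R, 𝒜.IsMaxLeftIdealIn e N →
      ∃ I : Ideal (Re 𝒜 h e), I.IsMaximal ∧ ∀ a : Re 𝒜 h e, a ∈ I ↔ a.val ∈ N := by
    intro N hN
    obtain ⟨I, hI⟩ := mkIdl N hN.1
    refine ⟨I, ?_, hI⟩
    rw [Ideal.isMaximal_def]
    constructor
    · intro htop
      apply hN.2.1
      refine Set.Subset.antisymm hN.1.1 (fun x hx => ?_)
      exact (hI ⟨x, hx⟩).1 (htop ▸ Submodule.mem_top)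
    · intro J hIJ
      have hLN : N ⊆ Re.val '' (J : Set (Re 𝒜 h e)) := by
        intro x hx
        exact ⟨⟨x, hN.1.1 hx⟩, hIJ.le ((hI _).2 hx), rfl⟩
      rcases hN.2.2 _ (idlSet J) hLN with h1 | h1
      · exfalso
        obtain ⟨x, hxJ, hxI⟩ := SetLike.exists_of_lt hIJ
        apply hxI
        apply (hI x).2
        rw [← h1]
        exact ⟨x, hxJ, rfl⟩
      · have h1J : (1 : Re 𝒜 h e) ∈ J := by
          have hone : (𝒜.one e) ∈ Re.val '' (J : Set (Re 𝒜 h e)) := by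
            rw [h1]; exact h.one_mem e
          obtain ⟨a, haJ, hav⟩ := hone
          have ha1 : a = 1 := rext 𝒜 h (by rw [hav, val_one])
          exact ha1 ▸ haJ
        exact (Ideal.eq_top_iff_one J).2 h1J
  -- radIn membership vs jacobson membership
  have memrad : ∀ x' : Re 𝒜 h e,
      (x'.val ∈ 𝒜.radIn e ↔ x' ∈ Ideal.jacobson (⊥ : Ideal (Re 𝒜 h e))) := by
    intro x'
    constructor
    · intro hx
      rw [Ideal.jacobson, Submodule.mem_sInf]
      rintro J ⟨-, hJmax⟩
      have hmem : x'.val ∈ Re.val '' (J : Set (Re 𝒜 h e)) :=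
        hx.2 _ (maxIn_of J hJmax)
      obtain ⟨a, haJ, hav⟩ := hmem
      exact (rext 𝒜 h hav : a = x') ▸ haJ
    · intro hx
      refine ⟨x'.mem, ?_⟩
      intro N hN
      obtain ⟨I, hImax, hIiff⟩ := maxIdl_of N hN
      apply (hIiff x').1
      have hle : Ideal.jacobson (⊥ : Ideal (Re 𝒜 h e)) ≤ I := sInf_le ⟨bot_le, hImax⟩
      exact hle hx
  -- unit unfolding
  have unitToR : ∀ z : Re 𝒜 h e, IsUnit z → ∃ u ∈ 𝒜.component (𝟙 e),
      𝒜.mul z.val u = 𝒜.one e ∧ 𝒜.mul u z.val = 𝒜.one e := by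
    rintro z ⟨v, rfl⟩
    refine ⟨(↑v⁻¹ : Re 𝒜 h e).val, (↑v⁻¹ : Re 𝒜 h e).mem, ?_, ?_⟩
    · rw [← val_mul 𝒜 h, ← val_one 𝒜 h]
      exact congrArg Re.val v.mul_inv
    · rw [← val_mul 𝒜 h, ← val_one 𝒜 h]
      exact congrArg Re.val v.inv_mul
  refine ⟨?_, ?_, ?_⟩
  · -- units from radIn
    intro x hx s hs
    set x' : Re 𝒜 h e := ⟨x, hx.1⟩ with hx'
    set s' : Re 𝒜 h e := ⟨s, hs⟩ with hs'
    have hjac : x' ∈ Ideal.jacobson (⊥ : Ideal (Re 𝒜 h e)) := (memrad x').1 hx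
    have hall : ∀ y : Re 𝒜 h e, IsUnit (1 + y * x') := mem_jacobson_bot_iff'.1 hjac
    constructor
    · have hu : IsUnit (1 + x' * (-s')) := unit_swap (hall (-s'))
      have heq : (1 + x' * (-s') : Re 𝒜 h e) = 1 - x' * s' := by noncomm_ring
      rw [heq] at hu
      obtain ⟨u, hu1, hu2, hu3⟩ := unitToR _ hu
      have hval : (1 - x' * s' : Re 𝒜 h e).val = 𝒜.one e - 𝒜.mul x s := by
        rw [val_sub, val_one, val_mul]
      rw [hval] at hu2 hu3
      exact ⟨u, hu1, hu2, hu3⟩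
    · have hu : IsUnit (1 + (-s') * x') := hall (-s')
      have heq : (1 + (-s') * x' : Re 𝒜 h e) = 1 - s' * x' := by noncomm_ring
      rw [heq] at hu
      obtain ⟨u, hu1, hu2, hu3⟩ := unitToR _ hu
      have hval : (1 - s' * x' : Re 𝒜 h e).val = 𝒜.one e - 𝒜.mul s x := by
        rw [val_sub, val_one, val_mul]
      rw [hval] at hu2 hu3
      exact ⟨u, hu1, hu2, hu3⟩
  · -- right inverses give radIn membership
    intro x hx H
    set x' : Re 𝒜 h e := ⟨x, hx⟩ with hx'
    have H' : ∀ y : Re 𝒜 h e, ∃ z : Re 𝒜 h e, (1 + x' * y) * z = 1 := by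
      intro y
      obtain ⟨u, hu, huv⟩ := H (-y).val (-y).mem
      refine ⟨⟨u, hu⟩, ?_⟩
      refine rext 𝒜 h ?_
      rw [val_mul, val_one]
      have hval : (1 + x' * y : Re 𝒜 h e).val = 𝒜.one e - 𝒜.mul x (-y).val := by
        rw [val_add, val_one, val_mul, val_neg, mneg 𝒜 h]
        abel
      rw [hval]
      exact huv
    have hall : ∀ y : Re 𝒜 h e, IsUnit (1 + y * x') := by
      intro y
      exact unit_swap (unit_of_right_inv_all H' y)
    exact (memrad x').2 (mem_jacobson_bot_iff'.2 hall)
  · -- left inverses give radIn membership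
    intro x hx H
    set x' : Re 𝒜 h e := ⟨x, hx⟩ with hx'
    have H' : ∀ y : Re 𝒜 h e, ∃ z : Re 𝒜 h e, z * (1 + y * x') = 1 := by
      intro y
      obtain ⟨u, hu, huv⟩ := H (-y).val (-y).mem
      refine ⟨⟨u, hu⟩, ?_⟩
      refine rext 𝒜 h ?_
      rw [val_mul, val_one]
      have hval : (1 + y * x' : Re 𝒜 h e).val = 𝒜.one e - 𝒜.mul (-y).val x := by
        rw [val_add, val_one, val_mul, val_neg, negm 𝒜 h]
        abel
      rw [hval]
      exact huv
    exact (memrad x').2 (mem_jacobson_bot_iff'.2 (unit_of_left_inv_all H'))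

end StmtAux
namespace StmtAux

variable {Γ : Type u} [Groupoid.{u} Γ] {R : Type u} [AddCommGroup R]
  (𝒜 : GRingData Γ R) (h : 𝒜.IsObjectUnital)
include h

open AddSubgroup CategoryTheory

lemma radIn_subset_grRad {e : Γ} {x : R} (hx : x ∈ 𝒜.radIn e) : x ∈ 𝒜.toMod.grRad := by
  rw [GModData.grRad, AddSubgroup.mem_sInf]
  intro N hN
  by_contra hxN
  have hxC : x ∈ 𝒜.component (𝟙 e) := hx.1
  obtain ⟨s, hs, hsN⟩ := L1r 𝒜 h hN hxC hxN
  obtain ⟨⟨u, hu, hu2, hu3⟩, -⟩ := (radIn_facts 𝒜 h e).1 x hx s hs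
  have h1 : 𝒜.one e ∈ N := by
    rw [← hu2]
    exact hN.1.1 _ hsN u
  have h2 : x ∈ N := by
    rw [← h.one_mul (𝟙 e) hxC]
    exact hN.1.1 _ h1 x
  exact hxN h2

lemma radIn_subset_lRad {e : Γ} {x : R} (hx : x ∈ 𝒜.radIn e) : x ∈ 𝒜.lRad := by
  rw [GRingData.lRad, AddSubgroup.mem_sInf]
  intro N hN
  by_contra hxN
  have hxC : x ∈ 𝒜.component (𝟙 e) := hx.1
  obtain ⟨s, hs, hsN⟩ := L1l 𝒜 h hN hxC hxN
  obtain ⟨-, ⟨u, hu, hu2, hu3⟩⟩ := (radIn_facts 𝒜 h e).1 x hx s hs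
  have h1 : 𝒜.one e ∈ N := by
    rw [← hu3]
    exact hN.1.1 _ hsN u
  have h2 : x ∈ N := by
    rw [← h.mul_one (𝟙 e) hxC]
    exact hN.1.1 _ h1 x
  exact hxN h2

lemma grRad_inter_subset {e : Γ} {x : R} (hx : x ∈ 𝒜.toMod.grRad)
    (hxC : x ∈ 𝒜.component (𝟙 e)) : x ∈ 𝒜.radIn e := by
  apply (radIn_facts 𝒜 h e).2.1 x hxC
  intro s hs
  by_contra hcon
  push_neg at hcon
  set y := 𝒜.one e - 𝒜.mul x s with hy
  have hyC : y ∈ 𝒜.component (𝟙 e) := sub_mem (h.one_mem e) (mulmem_e 𝒜 h hxC hs)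
  set N₁ : AddSubgroup R :=
    closure {z : R | ∃ (a b : Γ) (ρ : a ⟶ b), b ≠ e ∧ z ∈ 𝒜.component ρ} with hN₁
  have hN₁r : RSub 𝒜 N₁ := by
    intro m hm
    refine closure_induction (p := fun z _ => ∀ r, 𝒜.mul z r ∈ N₁) ?_ ?_ ?_ ?_ hm
    · rintro z ⟨a, b, ρ, hb, hz⟩ r
      rw [← sum_pr 𝒜 h r, msum 𝒜 h]
      refine sum_mem (fun γ _ => ?_)
      obtain ⟨c, d, π⟩ := γ
      by_cases hd : d = a
      · subst hd
        exact subset_closure ⟨c, b, π ≫ ρ, hb, h.mul_mem ρ π hz (pr_mem 𝒜 h ⟨c, d, π⟩ r)⟩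
      · rw [h.mul_eq_zero ρ π hd hz (pr_mem 𝒜 h ⟨c, d, π⟩ r)]
        exact zero_mem _
    · intro r
      rw [zm 𝒜 h]
      exact zero_mem _
    · intro z w _ _ hz hw r
      rw [h.right_distrib]
      exact add_mem (hz r) (hw r)
    · intro z _ hz r
      rw [negm 𝒜 h]
      exact neg_mem (hz r)
  have hN₁g : IsGr 𝒜 N₁ := by
    intro n hn
    refine closure_mono ?_ hn
    rintro z ⟨a, b, ρ, hb, hz⟩
    exact ⟨subset_closure ⟨a, b, ρ, hb, hz⟩, a, b, ρ, hz⟩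
  have prN₁ : ∀ n ∈ N₁, pr 𝒜 h ⟨e, e, 𝟙 e⟩ n = 0 := by
    intro n hn
    refine closure_induction (p := fun z _ => pr 𝒜 h ⟨e, e, 𝟙 e⟩ z = 0) ?_ ?_ ?_ ?_ hn
    · rintro z ⟨a, b, ρ, hb, hz⟩
      rw [pr_of_mem 𝒜 h (η := ⟨a, b, ρ⟩) hz,
        if_neg (fun hy => hb (congrArg (fun γ : GrIdx Γ => γ.2.1) hy).symm)]
    · exact pr_zero 𝒜 h _
    · intro z w _ _ hz hw
      rw [pr_add, hz, hw, add_zero]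
    · intro z _ hz
      rw [pr_neg, hz, neg_zero]
  have hgen : ∀ f : Γ, f ≠ e → 𝒜.one f ∈ N₁ := fun f hf =>
    subset_closure ⟨f, f, 𝟙 f, hf, h.one_mem f⟩
  have hone₁ : ∀ f : Γ, f ≠ e → 𝒜.one f ∈ N₁ ⊔ rId 𝒜 h y := fun f hf =>
    SetLike.le_def.1 le_sup_left (hgen f hf)
  have hQe : 𝒜.one e ∉ N₁ ⊔ rId 𝒜 h y := by
    intro hmem
    obtain ⟨n, hn, w', ⟨r, rfl⟩, heq⟩ := AddSubgroup.mem_sup.1 hmem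
    have hpr := congrArg (pr 𝒜 h ⟨e, e, 𝟙 e⟩) heq
    rw [pr_add, prN₁ n hn, zero_add,
      pr_of_mem 𝒜 h (η := ⟨e, e, 𝟙 e⟩) (h.one_mem e), if_pos rfl] at hpr
    have hprA := prA 𝒜 h (δ := 𝟙 e) hyC (σ := 𝟙 e) r
    rw [Category.id_comp] at hprA
    rw [← hprA] at hpr
    exact hcon _ (pr_mem 𝒜 h ⟨e, e, 𝟙 e⟩ r) hpr
  obtain ⟨N, hN, hQN⟩ := exists_grmax_right 𝒜 h e
    (⟨rsub_sup 𝒜 h hN₁r (rsub_rId 𝒜 h y), isGr_sup 𝒜 h hN₁g (isGr_rId 𝒜 h (𝟙 e) hyC)⟩ :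
      𝒜.toMod.IsGrSub (N₁ ⊔ rId 𝒜 h y))
    hone₁ hQe
  have hxN : x ∈ N := by
    rw [GModData.grRad] at hx
    exact (sInf_le hN : 𝒜.toMod.grRad ≤ N) hx
  have hxsN : 𝒜.mul x s ∈ N := hN.1.1 x hxN s
  have hyN : y ∈ N := hQN (SetLike.le_def.1 le_sup_right (mem_rId_self 𝒜 h (𝟙 e) hyC))
  have h1N : 𝒜.one e ∈ N := by
    have : 𝒜.one e = y + 𝒜.mul x s := by rw [hy]; abel
    rw [this]
    exact add_mem hyN hxsN
  have hoN : ∀ f : Γ, 𝒜.one f ∈ N := by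
    intro f
    by_cases hf : f = e
    · subst hf; exact h1N
    · exact hQN (hone₁ f hf)
  exact hN.2.1 (eq_top_right 𝒜 h hN.1.1 hoN)

lemma lRad_inter_subset {e : Γ} {x : R} (hx : x ∈ 𝒜.lRad)
    (hxC : x ∈ 𝒜.component (𝟙 e)) : x ∈ 𝒜.radIn e := by
  apply (radIn_facts 𝒜 h e).2.2 x hxC
  intro s hs
  by_contra hcon
  push_neg at hcon
  set y := 𝒜.one e - 𝒜.mul s x with hy
  have hyC : y ∈ 𝒜.component (𝟙 e) := sub_mem (h.one_mem e) (mulmem_e 𝒜 h hs hxC)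
  set N₁ : AddSubgroup R :=
    closure {z : R | ∃ (a b : Γ) (ρ : a ⟶ b), a ≠ e ∧ z ∈ 𝒜.component ρ} with hN₁
  have hN₁l : LSub 𝒜 N₁ := by
    intro m hm
    refine closure_induction (p := fun z _ => ∀ r, 𝒜.mul r z ∈ N₁) ?_ ?_ ?_ ?_ hm
    · rintro z ⟨a, b, ρ, ha, hz⟩ r
      rw [← sum_pr 𝒜 h r, summ 𝒜 h]
      refine sum_mem (fun γ _ => ?_)
      obtain ⟨c, d, π⟩ := γ
      by_cases hb : b = c
      · subst hb
        exact subset_closure ⟨a, d, ρ ≫ π, ha, h.mul_mem π ρ (pr_mem 𝒜 h ⟨b, d, π⟩ r) hz⟩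
      · rw [h.mul_eq_zero π ρ hb (pr_mem 𝒜 h ⟨c, d, π⟩ r) hz]
        exact zero_mem _
    · intro r
      rw [mz 𝒜 h]
      exact zero_mem _
    · intro z w _ _ hz hw r
      rw [h.left_distrib]
      exact add_mem (hz r) (hw r)
    · intro z _ hz r
      rw [mneg 𝒜 h]
      exact neg_mem (hz r)
  have hN₁g : IsGr 𝒜 N₁ := by
    intro n hn
    refine closure_mono ?_ hn
    rintro z ⟨a, b, ρ, ha, hz⟩
    exact ⟨subset_closure ⟨a, b, ρ, ha, hz⟩, a, b, ρ, hz⟩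
  have prN₁ : ∀ n ∈ N₁, pr 𝒜 h ⟨e, e, 𝟙 e⟩ n = 0 := by
    intro n hn
    refine closure_induction (p := fun z _ => pr 𝒜 h ⟨e, e, 𝟙 e⟩ z = 0) ?_ ?_ ?_ ?_ hn
    · rintro z ⟨a, b, ρ, ha, hz⟩
      rw [pr_of_mem 𝒜 h (η := ⟨a, b, ρ⟩) hz,
        if_neg (fun hy => ha (congrArg (fun γ : GrIdx Γ => γ.1) hy).symm)]
    · exact pr_zero 𝒜 h _
    · intro z w _ _ hz hw
      rw [pr_add, hz, hw, add_zero]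
    · intro z _ hz
      rw [pr_neg, hz, neg_zero]
  have hgen : ∀ f : Γ, f ≠ e → 𝒜.one f ∈ N₁ := fun f hf =>
    subset_closure ⟨f, f, 𝟙 f, hf, h.one_mem f⟩
  have hone₁ : ∀ f : Γ, f ≠ e → 𝒜.one f ∈ N₁ ⊔ lId 𝒜 h y := fun f hf =>
    SetLike.le_def.1 le_sup_left (hgen f hf)
  have hQe : 𝒜.one e ∉ N₁ ⊔ lId 𝒜 h y := by
    intro hmem
    obtain ⟨n, hn, w', ⟨r, rfl⟩, heq⟩ := AddSubgroup.mem_sup.1 hmem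
    have hpr := congrArg (pr 𝒜 h ⟨e, e, 𝟙 e⟩) heq
    rw [pr_add, prN₁ n hn, zero_add,
      pr_of_mem 𝒜 h (η := ⟨e, e, 𝟙 e⟩) (h.one_mem e), if_pos rfl] at hpr
    have hprB := prB 𝒜 h (δ := 𝟙 e) hyC (σ := 𝟙 e) r
    rw [Category.id_comp] at hprB
    rw [← hprB] at hpr
    exact hcon _ (pr_mem 𝒜 h ⟨e, e, 𝟙 e⟩ r) hpr
  obtain ⟨N, hN, hQN⟩ := exists_grmax_left 𝒜 h e
    (⟨lsub_sup 𝒜 h hN₁l (lsub_lId 𝒜 h y), isGr_sup 𝒜 h hN₁g (isGr_lId 𝒜 h (𝟙 e) hyC)⟩ :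
      𝒜.IsGrLeftIdeal (N₁ ⊔ lId 𝒜 h y))
    hone₁ hQe
  have hxN : x ∈ N := by
    rw [GRingData.lRad] at hx
    exact (sInf_le hN : 𝒜.lRad ≤ N) hx
  have hsxN : 𝒜.mul s x ∈ N := hN.1.1 x hxN s
  have hyN : y ∈ N := hQN (SetLike.le_def.1 le_sup_right (mem_lId_self 𝒜 h (𝟙 e) hyC))
  have h1N : 𝒜.one e ∈ N := by
    have : 𝒜.one e = y + 𝒜.mul s x := by rw [hy]; abel
    rw [this]
    exact add_mem hyN hsxN
  have hoN : ∀ f : Γ, 𝒜.one f ∈ N := by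
    intro f
    by_cases hf : f = e
    · subst hf; exact h1N
    · exact hQN (hone₁ f hf)
  exact hN.2.1 (eq_top_left 𝒜 h hN.1.1 hoN)

end StmtAux
namespace StmtAux

variable {Γ : Type u} [Groupoid.{u} Γ] {R : Type u} [AddCommGroup R]
  (𝒜 : GRingData Γ R) (h : 𝒜.IsObjectUnital)
include h

open AddSubgroup CategoryTheory

lemma le_grRad_of_components {J : AddSubgroup R} (hJ : 𝒜.IsGrIdeal J)
    (hcomp : ∀ e : Γ, (J : Set R) ∩ (𝒜.component (𝟙 e) : Set R) = 𝒜.radIn e) :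
    J ≤ 𝒜.toMod.grRad := by
  rw [GModData.grRad]
  refine le_sInf (fun N hN => ?_)
  by_contra hJN
  rw [SetLike.not_le_iff_exists] at hJN
  obtain ⟨x₀, hx₀J, hx₀N⟩ := hJN
  have hex : ∃ (a b : Γ) (σ : a ⟶ b) (j : R), j ∈ 𝒜.component σ ∧ j ∈ J ∧ j ∉ N := by
    by_contra hc
    push_neg at hc
    apply hx₀N
    rw [← sum_pr 𝒜 h x₀]
    exact sum_mem (fun γ _ => hc γ.1 γ.2.1 γ.2.2 _ (pr_mem 𝒜 h γ x₀)
      (pr_mem_of_gr 𝒜 h hJ.1.2 hx₀J γ))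
  obtain ⟨a, b, σ, j, hjC, hjJ, hjN⟩ := hex
  have hPgr : 𝒜.toMod.IsGrSub (N ⊔ rId 𝒜 h j) :=
    ⟨rsub_sup 𝒜 h hN.1.1 (rsub_rId 𝒜 h j), isGr_sup 𝒜 h hN.1.2 (isGr_rId 𝒜 h σ hjC)⟩
  have hjP : j ∈ N ⊔ rId 𝒜 h j := SetLike.le_def.1 le_sup_right (mem_rId_self 𝒜 h σ hjC)
  have hPtop : N ⊔ rId 𝒜 h j = ⊤ := by
    rcases hN.2.2 _ hPgr le_sup_left with h1 | h1
    · exact absurd (h1 ▸ hjP) hjN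
    · exact h1
  have h1P : 𝒜.one b ∈ N ⊔ rId 𝒜 h j := hPtop ▸ AddSubgroup.mem_top _
  obtain ⟨n, hn, w', ⟨r, rfl⟩, heq⟩ := AddSubgroup.mem_sup.1 h1P
  have hpr := congrArg (pr 𝒜 h ⟨b, b, 𝟙 b⟩) heq
  rw [pr_add, pr_of_mem 𝒜 h (η := ⟨b, b, 𝟙 b⟩) (h.one_mem b), if_pos rfl] at hpr
  have hprA := prA 𝒜 h (δ := σ) hjC (σ := Groupoid.inv σ) r
  rw [Groupoid.inv_comp] at hprA
  rw [← hprA] at hpr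
  set w := pr 𝒜 h ⟨b, a, Groupoid.inv σ⟩ r with hw
  set z := 𝒜.mul j w with hz
  have hzC : z ∈ 𝒜.component (𝟙 b) := by
    have := h.mul_mem σ (Groupoid.inv σ) hjC (pr_mem 𝒜 h ⟨b, a, Groupoid.inv σ⟩ r)
    rwa [Groupoid.inv_comp] at this
  have hzJ : z ∈ J := hJ.1.1 j hjJ w
  have hzrad : z ∈ 𝒜.radIn b := by
    rw [← hcomp b]
    exact ⟨hzJ, hzC⟩
  have hnN : 𝒜.one b - z ∈ N := by
    have heq2 : 𝒜.one b - z = pr 𝒜 h ⟨b, b, 𝟙 b⟩ n := by rw [← hpr]; abel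
    rw [heq2]
    exact pr_mem_of_gr 𝒜 h hN.1.2 hn _
  obtain ⟨⟨u, huC, hu2, hu3⟩, -⟩ := (radIn_facts 𝒜 h b).1 z hzrad (𝒜.one b) (h.one_mem b)
  rw [h.mul_one (𝟙 b) hzC] at hu2
  have h1N : 𝒜.one b ∈ N := by
    rw [← hu2]
    exact hN.1.1 _ hnN u
  apply hjN
  rw [← h.one_mul σ hjC]
  exact hN.1.1 _ h1N j

lemma le_lRad_of_components {J : AddSubgroup R} (hJ : 𝒜.IsGrIdeal J)
    (hcomp : ∀ e : Γ, (J : Set R) ∩ (𝒜.component (𝟙 e) : Set R) = 𝒜.radIn e) :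
    J ≤ 𝒜.lRad := by
  rw [GRingData.lRad]
  refine le_sInf (fun N hN => ?_)
  by_contra hJN
  rw [SetLike.not_le_iff_exists] at hJN
  obtain ⟨x₀, hx₀J, hx₀N⟩ := hJN
  have hex : ∃ (a b : Γ) (σ : a ⟶ b) (j : R), j ∈ 𝒜.component σ ∧ j ∈ J ∧ j ∉ N := by
    by_contra hc
    push_neg at hc
    apply hx₀N
    rw [← sum_pr 𝒜 h x₀]
    exact sum_mem (fun γ _ => hc γ.1 γ.2.1 γ.2.2 _ (pr_mem 𝒜 h γ x₀)
      (pr_mem_of_gr 𝒜 h hJ.1.2 hx₀J γ))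
  obtain ⟨a, b, σ, j, hjC, hjJ, hjN⟩ := hex
  have hPgr : 𝒜.IsGrLeftIdeal (N ⊔ lId 𝒜 h j) :=
    ⟨lsub_sup 𝒜 h hN.1.1 (lsub_lId 𝒜 h j), isGr_sup 𝒜 h hN.1.2 (isGr_lId 𝒜 h σ hjC)⟩
  have hjP : j ∈ N ⊔ lId 𝒜 h j := SetLike.le_def.1 le_sup_right (mem_lId_self 𝒜 h σ hjC)
  have hPtop : N ⊔ lId 𝒜 h j = ⊤ := by
    rcases hN.2.2 _ hPgr le_sup_left with h1 | h1
    · exact absurd (h1 ▸ hjP) hjN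
    · exact h1
  have h1P : 𝒜.one a ∈ N ⊔ lId 𝒜 h j := hPtop ▸ AddSubgroup.mem_top _
  obtain ⟨n, hn, w', ⟨r, rfl⟩, heq⟩ := AddSubgroup.mem_sup.1 h1P
  have hpr := congrArg (pr 𝒜 h ⟨a, a, 𝟙 a⟩) heq
  rw [pr_add, pr_of_mem 𝒜 h (η := ⟨a, a, 𝟙 a⟩) (h.one_mem a), if_pos rfl] at hpr
  have hprB := prB 𝒜 h (δ := σ) hjC (σ := Groupoid.inv σ) r
  rw [Groupoid.comp_inv] at hprB
  rw [← hprB] at hpr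
  set w := pr 𝒜 h ⟨b, a, Groupoid.inv σ⟩ r with hw
  set z := 𝒜.mul w j with hz
  have hzC : z ∈ 𝒜.component (𝟙 a) := by
    have := h.mul_mem (Groupoid.inv σ) σ (pr_mem 𝒜 h ⟨b, a, Groupoid.inv σ⟩ r) hjC
    rwa [Groupoid.comp_inv] at this
  have hzJ : z ∈ J := hJ.2 j hjJ w
  have hzrad : z ∈ 𝒜.radIn a := by
    rw [← hcomp a]
    exact ⟨hzJ, hzC⟩
  have hnN : 𝒜.one a - z ∈ N := by
    have heq2 : 𝒜.one a - z = pr 𝒜 h ⟨a, a, 𝟙 a⟩ n := by rw [← hpr]; abel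
    rw [heq2]
    exact pr_mem_of_gr 𝒜 h hN.1.2 hn _
  obtain ⟨⟨u, huC, hu2, hu3⟩, -⟩ := (radIn_facts 𝒜 h a).1 z hzrad (𝒜.one a) (h.one_mem a)
  rw [h.mul_one (𝟙 a) hzC] at hu2 hu3
  have h1N : 𝒜.one a ∈ N := by
    rw [← hu3]
    exact hN.1.1 _ hnN u
  apply hjN
  rw [← h.mul_one σ hjC]
  exact hN.1.1 _ h1N j

lemma grRad_inter_eq (e : Γ) :
    (𝒜.toMod.grRad : Set R) ∩ (𝒜.component (𝟙 e) : Set R) = 𝒜.radIn e := by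
  ext x
  constructor
  · rintro ⟨h1, h2⟩
    exact grRad_inter_subset 𝒜 h h1 h2
  · intro hx
    exact ⟨radIn_subset_grRad 𝒜 h hx, hx.1⟩

lemma lRad_inter_eq (e : Γ) :
    (𝒜.lRad : Set R) ∩ (𝒜.component (𝟙 e) : Set R) = 𝒜.radIn e := by
  ext x
  constructor
  · rintro ⟨h1, h2⟩
    exact lRad_inter_subset 𝒜 h h1 h2
  · intro hx
    exact ⟨radIn_subset_lRad 𝒜 h hx, hx.1⟩

lemma grRad_eq_lRad : 𝒜.toMod.grRad = 𝒜.lRad := by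
  apply le_antisymm
  · exact le_lRad_of_components 𝒜 h (grRad_isGrIdeal 𝒜 h) (grRad_inter_eq 𝒜 h)
  · exact le_grRad_of_components 𝒜 h (lRad_isGrIdeal 𝒜 h) (lRad_inter_eq 𝒜 h)

end StmtAux

/-- Let `R` be a `Γ`-graded ring. Then
`rad^gr(R_R) = rad^gr(_RR)`; this common graded ideal, `rad^gr(R)`, is the
largest graded ideal `J` of `R` such that `J ∩ R_e = rad(R_e)` for every
`e ∈ Γ₀`, where `rad(R_e)` is the Jacobson radical of the unital ring `R_e`. -/
theorem grRad_eq_lRad_and_largest_ideal_with_components_rad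
    {Γ : Type u} [Groupoid.{u} Γ] {R : Type u} [AddCommGroup R]
    (𝒜 : GRingData Γ R) (h𝒜 : 𝒜.IsObjectUnital) :
    𝒜.toMod.grRad = 𝒜.lRad ∧
    𝒜.IsGrIdeal 𝒜.toMod.grRad ∧
    (∀ e : Γ,
      (𝒜.toMod.grRad : Set R) ∩ (𝒜.component (𝟙 e) : Set R) = 𝒜.radIn e) ∧
    ∀ J : AddSubgroup R, 𝒜.IsGrIdeal J →
      (∀ e : Γ, (J : Set R) ∩ (𝒜.component (𝟙 e) : Set R) = 𝒜.radIn e) →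
      J ≤ 𝒜.toMod.grRad := by
  exact ⟨StmtAux.grRad_eq_lRad 𝒜 h𝒜, StmtAux.grRad_isGrIdeal 𝒜 h𝒜,
    StmtAux.grRad_inter_eq 𝒜 h𝒜,
    fun _ hJ hcomp => StmtAux.le_grRad_of_components 𝒜 h𝒜 hJ hcomp⟩
end

section
/- (Graded Nakayama lemma.) Let R be a Γ-graded ring and J a graded right ideal of R. The following are equivalent: (1) J ⊆ rad^gr(R); (2) for every finitely generated Γ-graded right R-module M, MJ = M implies M = 0; (3) for every Γ-graded right R-module M and every graded submodule N of M such that M/N is finitely generated, N + MJ = M implies N = M. -/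
open CategoryTheory

universe u

variable {Γ : Type u} [Groupoid.{u} Γ]

/-! If `x ∈ M_σ` is nonzero in a gr-simple module `M`, the right ideal `{r | x r = 0}` is
gr-maximal: it is graded because the terms `x r_τ` have distinct degrees, and for a graded right
ideal `L` containing it, `xL` is a graded submodule of `M`, hence `0` or `M`. So `rad^gr(R)`
annihilates every gr-simple module.

(1 ⇒ 2) A nonzero finitely generated graded module has a gr-maximal graded submodule `P` (Zorn);
`M/P` is gr-simple, so `MJ ⊆ P ≠ M`. (2 ⇒ 3) Apply (2) to `M/N`. (3 ⇒ 1) If `J ⊄ P` for a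
gr-maximal `P`, then `P + J = R`; since `j = 1_{r(γ)} j` for `j ∈ J_γ`, also `P + RJ = R`. And
`R/P` is gr-simple, hence generated by any nonzero homogeneous `x` (as `x = x 1_{d(σ)}`), so (3)
forces `P = R`. -/

lemma Finset.sum_union_ite_mem_left {ι β : Type*} [AddCommMonoid β] [DecidableEq ι]
    (s t : Finset ι) (f : ι → β) :
    ∑ i ∈ s ∪ t, (if i ∈ s then f i else 0) = ∑ i ∈ s, f i := by
  rw [Finset.sum_ite_mem, Finset.union_inter_cancel_left]

namespace GModData

variable {R : Type u} {M : Type u} [AddCommGroup M] {ℳ : GModData Γ R M}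

variable (ℳ) in
lemma exists_sum_of_mem_closure {N : AddSubgroup M} {n : M}
    (hn : n ∈ AddSubgroup.closure {x | x ∈ N ∧ ℳ.IsHomogeneous x}) :
    ∃ (s : Finset (GrIdx Γ)) (cf : GrIdx Γ → M),
      (∀ γ ∈ s, cf γ ∈ ℳ.component γ.2.2 ∧ cf γ ∈ N) ∧ n = ∑ γ ∈ s, cf γ := by
  classical
  induction hn using AddSubgroup.closure_induction with
  | mem x hx =>
    obtain ⟨hxN, e, f, γ, hγ⟩ := hx
    exact ⟨{⟨e, f, γ⟩}, fun _ => x, by simp [hγ, hxN], by simp⟩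
  | zero => exact ⟨∅, fun _ => 0, by simp, by simp⟩
  | add x y _ _ ihx ihy =>
    obtain ⟨s, cf, hcf, rfl⟩ := ihx
    obtain ⟨t, df, hdf, rfl⟩ := ihy
    refine ⟨s ∪ t, fun γ => (if γ ∈ s then cf γ else 0) + (if γ ∈ t then df γ else 0),
      fun γ _ => ?_, ?_⟩
    · by_cases hs : γ ∈ s <;> by_cases ht : γ ∈ t <;>
        simp [hs, ht, hcf, hdf, add_mem, zero_mem]
    · rw [Finset.sum_add_distrib, Finset.sum_union_ite_mem_left, Finset.union_comm,
        Finset.sum_union_ite_mem_left]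
  | neg x _ ihx =>
    obtain ⟨s, cf, hcf, rfl⟩ := ihx
    exact ⟨s, fun γ => -cf γ, fun γ hγ => ⟨neg_mem (hcf γ hγ).1, neg_mem (hcf γ hγ).2⟩,
      by rw [Finset.sum_neg_distrib]⟩

variable (ℳ) in
lemma subset_rClosure (X : Set M) : X ⊆ ℳ.rClosure X :=
  fun _ hx => AddSubgroup.mem_sInf.mpr fun _ hN => hN.1 hx

variable (ℳ) in
lemma smul_mem_rClosure {X : Set M} {m : M}
    (hm : m ∈ ℳ.rClosure X) (a : R) : ℳ.smul m a ∈ ℳ.rClosure X :=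
  AddSubgroup.mem_sInf.mpr fun N hN => hN.2 m (AddSubgroup.mem_sInf.mp hm N hN) a

variable (ℳ) in
lemma rClosure_le {X : Set M} {N : AddSubgroup M}
    (hX : X ⊆ N) (hN : ∀ m ∈ N, ∀ a : R, ℳ.smul m a ∈ N) : ℳ.rClosure X ≤ N :=
  sInf_le ⟨hX, hN⟩

lemma closure_homogeneous_quot_le_map {N : AddSubgroup M} (Q : AddSubgroup (M ⧸ N)) :
    AddSubgroup.closure {x | x ∈ Q ∧ (ℳ.quot N).IsHomogeneous x} ≤
      (AddSubgroup.closure {m | m ∈ Q.comap (QuotientAddGroup.mk' N) ∧ ℳ.IsHomogeneous m}).map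
        (QuotientAddGroup.mk' N) := by
  rw [AddSubgroup.closure_le]
  rintro _ ⟨hxQ, e, f, γ, m, hm, rfl⟩
  exact ⟨m, AddSubgroup.subset_closure ⟨hxQ, e, f, γ, hm⟩, rfl⟩

lemma isGrSub_sSup_of_directedOn {c : Set (AddSubgroup M)} (hne : c.Nonempty)
    (hdir : DirectedOn (· ≤ ·) c) (hc : ∀ N ∈ c, ℳ.IsGrSub N) : ℳ.IsGrSub (sSup c) := by
  have hmem {m : M} : m ∈ sSup c ↔ ∃ N ∈ c, m ∈ N :=
    AddSubgroup.mem_sSup_of_directedOn hne hdir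
  refine ⟨fun m hm a => ?_, fun m hm => ?_⟩
  · obtain ⟨N, hN, hmN⟩ := hmem.mp hm
    exact le_sSup hN ((hc N hN).1 m hmN a)
  · obtain ⟨N, hN, hmN⟩ := hmem.mp hm
    refine AddSubgroup.closure_mono ?_ ((hc N hN).2 m hmN)
    exact fun x hx => ⟨le_sSup hN hx.1, hx.2⟩

lemma FG.top_mem_of_directedOn (hfg : ℳ.FG) {c : Set (AddSubgroup M)} (hne : c.Nonempty)
    (hdir : DirectedOn (· ≤ ·) c) (hc : ∀ N ∈ c, ∀ m ∈ N, ∀ a : R, ℳ.smul m a ∈ N)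
    (htop : sSup c = ⊤) : ⊤ ∈ c := by
  obtain ⟨s, hs⟩ := hfg
  obtain ⟨N, hN, hsN⟩ := hdir.exists_mem_subset_of_finset_subset_biUnion (f := SetLike.coe)
    hne (s := s) fun m _ => by
      obtain ⟨N, hN, hmN⟩ :=
        (AddSubgroup.mem_sSup_of_directedOn hne hdir).mp (htop ▸ AddSubgroup.mem_top m)
      exact Set.mem_biUnion hN hmN
  have hN_top : N = ⊤ := top_le_iff.mp (hs ▸ ℳ.rClosure_le hsN (hc N hN))
  exact hN_top ▸ hN

variable [AddCommGroup R] {𝒜 : GRingData Γ R}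

namespace IsGraded

def mulLeft (h : ℳ.IsGraded 𝒜) (m : M) : R →+ M :=
  AddMonoidHom.mk' (ℳ.smul m) (h.smul_add m)

def mulRight (h : ℳ.IsGraded 𝒜) (a : R) : M →+ M :=
  AddMonoidHom.mk' (ℳ.smul · a) (h.add_smul · · a)

@[simp] lemma mulLeft_apply (h : ℳ.IsGraded 𝒜) (m : M) (a : R) :
    h.mulLeft m a = ℳ.smul m a := rfl

@[simp] lemma mulRight_apply (h : ℳ.IsGraded 𝒜) (a : R) (m : M) :
    h.mulRight a m = ℳ.smul m a := rfl

lemma zero_smul (h : ℳ.IsGraded 𝒜) (a : R) : ℳ.smul 0 a = 0 := (h.mulRight a).map_zero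

lemma isHomogeneous_smul (h : ℳ.IsGraded 𝒜) {m : M} {a : R} (hm : ℳ.IsHomogeneous m)
    (ha : 𝒜.toMod.IsHomogeneous a) : ℳ.IsHomogeneous (ℳ.smul m a) := by
  obtain ⟨e, f, σ, hm⟩ := hm
  obtain ⟨g, g', τ, ha⟩ := ha
  by_cases hg' : g' = e
  · subst hg'
    exact ⟨g, f, τ ≫ σ, h.smul_mem σ τ hm ha⟩
  · exact ⟨e, f, σ, by rw [h.smul_eq_zero σ τ hg' hm ha]; exact zero_mem _⟩

lemma sum_eq_sum (h : ℳ.IsGraded 𝒜) [DecidableEq (GrIdx Γ)] {s t : Finset (GrIdx Γ)}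
    {f g : GrIdx Γ → M} (hf : ∀ γ ∈ s, f γ ∈ ℳ.component γ.2.2)
    (hg : ∀ γ ∈ t, g γ ∈ ℳ.component γ.2.2) (hfg : ∑ γ ∈ s, f γ = ∑ γ ∈ t, g γ)
    {γ : GrIdx Γ} (hγ : γ ∈ s) : f γ = if γ ∈ t then g γ else 0 := by
  have key := h.independent (s ∪ t)
    (fun γ => (if γ ∈ s then f γ else 0) - (if γ ∈ t then g γ else 0))
    (fun γ _ => sub_mem (by split_ifs with hs <;> simp [hf, hs, zero_mem])
      (by split_ifs with ht <;> simp [hg, ht, zero_mem]))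
    (by rw [Finset.sum_sub_distrib, Finset.sum_union_ite_mem_left, Finset.union_comm,
      Finset.sum_union_ite_mem_left, hfg, sub_self]) γ (Finset.mem_union_left t hγ)
  rwa [if_pos hγ, sub_eq_zero] at key

lemma eq_zero_of_sum_eq_zero (h : ℳ.IsGraded 𝒜) {ι : Type*} {s : Finset ι}
    {φ : ι → GrIdx Γ} (hφ : Set.InjOn φ s) {f : ι → M}
    (hf : ∀ i ∈ s, f i ∈ ℳ.component (φ i).2.2) (hsum : ∑ i ∈ s, f i = 0) {i : ι}
    (hi : i ∈ s) : f i = 0 := by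
  classical
  have : Nonempty ι := ⟨i⟩
  have hinv : ∀ j ∈ s, Function.invFunOn φ s (φ j) = j := fun j hj =>
    hφ.leftInvOn_invFunOn hj
  have key := h.independent (s.image φ) (fun δ => f (Function.invFunOn φ s δ))
    (by
      rintro _ hδ
      obtain ⟨j, hj, rfl⟩ := Finset.mem_image.mp hδ
      rw [hinv j hj]
      exact hf j hj)
    (by rwa [Finset.sum_image hφ, Finset.sum_congr rfl fun j hj => congrArg f (hinv j hj)])
    (φ i) (Finset.mem_image_of_mem φ hi)
  rwa [hinv i hi] at key

lemma smul_eq_zero_of_smul_sum_eq_zero (h : ℳ.IsGraded 𝒜) {e f : Γ} {σ : e ⟶ f}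
    {x : M} (hx : x ∈ ℳ.component σ) {s : Finset (GrIdx Γ)} {r : GrIdx Γ → R}
    (hr : ∀ τ ∈ s, r τ ∈ 𝒜.component τ.2.2) (hsum : ℳ.smul x (∑ τ ∈ s, r τ) = 0)
    {τ : GrIdx Γ} (hτ : τ ∈ s) : ℳ.smul x (r τ) = 0 := by
  let inc : (Σ g : Γ, g ⟶ e) → GrIdx Γ := fun κ => ⟨κ.1, e, κ.2⟩
  have hinc : inc.Injective := by
    rintro ⟨g, t⟩ ⟨g', t'⟩ h
    obtain ⟨rfl, h⟩ := Sigma.mk.inj_iff.mp h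
    simp_all
  have hσ : Function.Injective fun κ : Σ g : Γ, g ⟶ e => (⟨κ.1, f, κ.2 ≫ σ⟩ : GrIdx Γ) := by
    rintro ⟨g, t⟩ ⟨g', t'⟩ h
    obtain ⟨rfl, h⟩ := Sigma.mk.inj_iff.mp h
    simp_all [cancel_mono]
  have hout : ∀ τ ∈ s, τ ∉ Set.range inc → ℳ.smul x (r τ) = 0 := by
    rintro ⟨g, g', t⟩ hτ hne
    by_cases hg' : g' = e
    · subst hg'
      exact absurd ⟨⟨g, t⟩, rfl⟩ hne
    · exact h.smul_eq_zero σ t hg' hx (hr _ hτ)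
  by_cases hτe : τ ∈ Set.range inc
  · obtain ⟨κ, rfl⟩ := hτe
    refine h.eq_zero_of_sum_eq_zero hσ.injOn (s := s.preimage inc hinc.injOn)
      (f := fun κ => ℳ.smul x (r (inc κ))) ?_ ?_ (Finset.mem_preimage.mpr hτ)
    · exact fun κ hκ => h.smul_mem σ κ.2 hx (hr _ (Finset.mem_preimage.mp hκ))
    · rw [Finset.sum_preimage inc s hinc.injOn _ hout]
      rwa [← h.mulLeft_apply, map_sum] at hsum
  · exact hout τ hτ hτe

end IsGraded

lemma _root_.GRingData.IsObjectUnital.toMod_isGraded (h𝒜 : 𝒜.IsObjectUnital) :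
    𝒜.toMod.IsGraded 𝒜 where
  add_smul := h𝒜.right_distrib
  smul_add := h𝒜.left_distrib
  smul_mul m a b := (h𝒜.mul_assoc m a b).symm
  decompose := h𝒜.decompose
  independent := h𝒜.independent
  smul_mem := h𝒜.mul_mem
  smul_eq_zero := h𝒜.mul_eq_zero
  smul_one := h𝒜.mul_one

lemma isGrSub_bot (h : ℳ.IsGraded 𝒜) : ℳ.IsGrSub ⊥ := by
  refine ⟨fun m hm a => ?_, fun n hn => ?_⟩
  · rw [AddSubgroup.mem_bot.mp hm, h.zero_smul]
    exact zero_mem _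
  · rw [AddSubgroup.mem_bot.mp hn]
    exact zero_mem _

lemma isGrSub_top (h : ℳ.IsGraded 𝒜) : ℳ.IsGrSub ⊤ := by
  refine ⟨fun _ _ _ => AddSubgroup.mem_top _, fun n _ => ?_⟩
  obtain ⟨s, cf, hcf, rfl⟩ := h.decompose n
  exact AddSubgroup.sum_mem _ fun γ hγ =>
    AddSubgroup.subset_closure ⟨AddSubgroup.mem_top _, _, _, _, hcf γ hγ⟩

lemma IsGrSub.sup (h : ℳ.IsGraded 𝒜) {A B : AddSubgroup M} (hA : ℳ.IsGrSub A)
    (hB : ℳ.IsGrSub B) : ℳ.IsGrSub (A ⊔ B) := by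
  have hmono {C : AddSubgroup M} (hC : C ≤ A ⊔ B) :
      AddSubgroup.closure {x | x ∈ C ∧ ℳ.IsHomogeneous x} ≤
        AddSubgroup.closure {x | x ∈ A ⊔ B ∧ ℳ.IsHomogeneous x} :=
    AddSubgroup.closure_mono fun x hx => ⟨hC hx.1, hx.2⟩
  refine ⟨fun m hm a => ?_, fun n hn => ?_⟩
  · obtain ⟨y, hy, z, hz, rfl⟩ := AddSubgroup.mem_sup.mp hm
    rw [h.add_smul]
    exact add_mem (AddSubgroup.mem_sup_left (hA.1 y hy a))
      (AddSubgroup.mem_sup_right (hB.1 z hz a))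
  · obtain ⟨y, hy, z, hz, rfl⟩ := AddSubgroup.mem_sup.mp hn
    exact add_mem (hmono le_sup_left (hA.2 y hy)) (hmono le_sup_right (hB.2 z hz))

lemma IsGrSub.mem_of_sum_mem {N : AddSubgroup M} (hN : ℳ.IsGrSub N) (h : ℳ.IsGraded 𝒜)
    {s : Finset (GrIdx Γ)} {f : GrIdx Γ → M} (hf : ∀ γ ∈ s, f γ ∈ ℳ.component γ.2.2)
    (hsum : ∑ γ ∈ s, f γ ∈ N) {γ : GrIdx Γ} (hγ : γ ∈ s) : f γ ∈ N := by
  classical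
  obtain ⟨t, g, hg, heq⟩ := ℳ.exists_sum_of_mem_closure (hN.2 _ hsum)
  rw [h.sum_eq_sum hf (fun γ hγ => (hg γ hγ).1) heq hγ]
  split_ifs with ht
  exacts [(hg γ ht).2, zero_mem N]

lemma IsGraded.exists_isGrMaximalSub (h : ℳ.IsGraded 𝒜) (hfg : ℳ.FG)
    (hne : (⊤ : AddSubgroup M) ≠ ⊥) : ∃ P, ℳ.IsGrMaximalSub P := by
  obtain ⟨P, -, ⟨hPgr, hPtop⟩, hPmax⟩ := zorn_le_nonempty₀ {P | ℳ.IsGrSub P ∧ P ≠ ⊤}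
    (fun c hcS hchain N hN => ⟨sSup c,
      ⟨isGrSub_sSup_of_directedOn ⟨N, hN⟩ hchain.directedOn fun P hP => (hcS hP).1,
        fun htop => (hcS (hfg.top_mem_of_directedOn ⟨N, hN⟩ hchain.directedOn
          (fun P hP => (hcS hP).1.1) htop)).2 rfl⟩,
      fun P hP => le_sSup hP⟩) ⊥ ⟨isGrSub_bot h, hne.symm⟩
  refine ⟨P, hPgr, hPtop, fun L hL hPL => ?_⟩
  by_cases hLtop : L = ⊤
  · exact Or.inr hLtop
  · exact Or.inl (le_antisymm (hPmax ⟨hL, hLtop⟩ hPL) hPL)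

section Quot

variable {N : AddSubgroup M}

/-- `ℳ.quot N` acts through the representative `Quotient.out`, so the action is only
well defined when `N` is stable under `R`. -/
lemma IsGraded.quot_smul_mk (h : ℳ.IsGraded 𝒜) (hN : ∀ m ∈ N, ∀ a : R, ℳ.smul m a ∈ N)
    (m : M) (a : R) : (ℳ.quot N).smul (m : M ⧸ N) a = (ℳ.smul m a : M ⧸ N) := by
  have hm : -Quotient.out (m : M ⧸ N) + m ∈ N :=
    QuotientAddGroup.eq.mp (QuotientAddGroup.out_eq' _)
  refine QuotientAddGroup.eq.mpr ?_
  convert hN _ hm a using 1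
  simp only [← h.mulRight_apply, map_add, map_neg]

lemma IsGraded.quot_independent (h : ℳ.IsGraded 𝒜) (hN : ℳ.IsGrSub N)
    (s : Finset (GrIdx Γ)) (cf : GrIdx Γ → M ⧸ N) (hcf : ∀ γ ∈ s, cf γ ∈ (ℳ.quot N).component γ.2.2)
    (hsum : ∑ γ ∈ s, cf γ = 0) : ∀ γ ∈ s, cf γ = 0 := by
  have hlift : ∀ γ, ∃ m : M, γ ∈ s → m ∈ ℳ.component γ.2.2 ∧ (m : M ⧸ N) = cf γ := by
    intro γ
    by_cases hγ : γ ∈ s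
    · obtain ⟨m, hm, hmk⟩ := hcf γ hγ
      exact ⟨m, fun _ => ⟨hm, hmk⟩⟩
    · exact ⟨0, fun hγ' => absurd hγ' hγ⟩
  choose m hm using hlift
  have hmN : ∑ γ ∈ s, m γ ∈ N := by
    rw [← QuotientAddGroup.eq_zero_iff, ← hsum, ← QuotientAddGroup.mk'_apply, map_sum]
    exact Finset.sum_congr rfl fun γ hγ => (hm γ hγ).2
  intro γ hγ
  rw [← (hm γ hγ).2, QuotientAddGroup.eq_zero_iff]
  exact hN.mem_of_sum_mem h (fun γ hγ => (hm γ hγ).1) hmN hγ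

lemma IsGraded.quot (h : ℳ.IsGraded 𝒜) (hN : ℳ.IsGrSub N) : (ℳ.quot N).IsGraded 𝒜 where
  add_smul x y a := by
    obtain ⟨m, rfl⟩ := QuotientAddGroup.mk_surjective x
    obtain ⟨n, rfl⟩ := QuotientAddGroup.mk_surjective y
    simp only [← QuotientAddGroup.mk_add, h.quot_smul_mk hN.1, h.add_smul]
  smul_add x a b := by
    obtain ⟨m, rfl⟩ := QuotientAddGroup.mk_surjective x
    simp only [h.quot_smul_mk hN.1, h.smul_add, QuotientAddGroup.mk_add]
  smul_mul x a b := by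
    obtain ⟨m, rfl⟩ := QuotientAddGroup.mk_surjective x
    simp only [h.quot_smul_mk hN.1, h.smul_mul]
  decompose x := by
    obtain ⟨m, rfl⟩ := QuotientAddGroup.mk_surjective x
    obtain ⟨s, cf, hcf, rfl⟩ := h.decompose m
    exact ⟨s, fun γ => cf γ, fun γ hγ => ⟨cf γ, hcf γ hγ, rfl⟩,
      map_sum (QuotientAddGroup.mk' N) cf s⟩
  independent := h.quot_independent hN
  smul_mem σ τ x a := by
    rintro ⟨m, hm, rfl⟩ ha
    exact ⟨ℳ.smul m a, h.smul_mem σ τ hm ha, (h.quot_smul_mk hN.1 m a).symm⟩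
  smul_eq_zero σ τ x a hne := by
    rintro ⟨m, hm, rfl⟩ ha
    rw [QuotientAddGroup.mk'_apply, h.quot_smul_mk hN.1, h.smul_eq_zero σ τ hne hm ha]
    rfl
  smul_one σ x := by
    rintro ⟨m, hm, rfl⟩
    rw [QuotientAddGroup.mk'_apply, h.quot_smul_mk hN.1, h.smul_one σ hm]

lemma isGrSub_comap_mk (h : ℳ.IsGraded 𝒜) (hN : ℳ.IsGrSub N) {Q : AddSubgroup (M ⧸ N)}
    (hQ : (ℳ.quot N).IsGrSub Q) : ℳ.IsGrSub (Q.comap (QuotientAddGroup.mk' N)) := by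
  refine ⟨fun m hm a => ?_, fun m hm => ?_⟩
  · rw [AddSubgroup.mem_comap, QuotientAddGroup.mk'_apply, ← h.quot_smul_mk hN.1]
    exact hQ.1 _ hm a
  · obtain ⟨m', hm', hmk⟩ := closure_homogeneous_quot_le_map Q (hQ.2 _ hm)
    have hdiff : m - m' ∈ N := by
      rw [← QuotientAddGroup.eq_zero_iff, QuotientAddGroup.mk_sub]
      rw [QuotientAddGroup.mk'_apply, QuotientAddGroup.mk'_apply] at hmk
      rw [hmk, sub_self]
    rw [← sub_add_cancel m m']
    refine add_mem (AddSubgroup.closure_mono ?_ (hN.2 _ hdiff)) hm'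
    exact fun x hx => ⟨QuotientAddGroup.le_comap_mk' N Q hx.1, hx.2⟩

lemma IsGrMaximalSub.isGrSimple_quot (h : ℳ.IsGraded 𝒜) {P : AddSubgroup M}
    (hP : ℳ.IsGrMaximalSub P) : (ℳ.quot P).IsGrSimple := by
  obtain ⟨hPgr, hPtop, hPmax⟩ := hP
  refine ⟨fun htop => hPtop ((AddSubgroup.eq_top_iff' P).mpr fun m => ?_), fun Q hQ => ?_⟩
  · rw [← QuotientAddGroup.eq_zero_iff, ← AddSubgroup.mem_bot, ← htop]
    exact AddSubgroup.mem_top _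
  · have hQ_eq := AddSubgroup.map_comap_eq_self_of_surjective
      (QuotientAddGroup.mk'_surjective P) Q
    rcases hPmax _ (isGrSub_comap_mk h hPgr hQ) (QuotientAddGroup.le_comap_mk' P Q)
      with hc | hc <;> rw [hc] at hQ_eq
    · exact Or.inl (hQ_eq.symm.trans (QuotientAddGroup.map_mk'_self P))
    · exact Or.inr (hQ_eq.symm.trans
        (AddSubgroup.map_top_of_surjective _ (QuotientAddGroup.mk'_surjective P)))

end Quot

lemma isGrSub_map_mulLeft (h : ℳ.IsGraded 𝒜) {x : M} (hx : ℳ.IsHomogeneous x)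
    {L : AddSubgroup R} (hL : 𝒜.toMod.IsGrSub L) : ℳ.IsGrSub (L.map (h.mulLeft x)) := by
  refine ⟨?_, fun y hy => ?_⟩
  · rintro _ ⟨l, hl, rfl⟩ b
    exact ⟨𝒜.mul l b, hL.1 l hl b, h.smul_mul x l b⟩
  · obtain ⟨l, hl, rfl⟩ := hy
    have hxl := AddSubgroup.mem_map_of_mem (h.mulLeft x) (hL.2 l hl)
    rw [AddMonoidHom.map_closure] at hxl
    refine AddSubgroup.closure_mono ?_ hxl
    rintro _ ⟨w, ⟨hwL, hw⟩, rfl⟩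
    exact ⟨⟨w, hwL, rfl⟩, h.isHomogeneous_smul hx hw⟩

lemma isGrSub_ker_mulLeft (h𝒜 : 𝒜.IsObjectUnital) (h : ℳ.IsGraded 𝒜) {e f : Γ}
    {σ : e ⟶ f} {x : M} (hx : x ∈ ℳ.component σ) : 𝒜.toMod.IsGrSub (h.mulLeft x).ker := by
  refine ⟨fun r hr a => ?_, fun r hr => ?_⟩
  · rw [AddMonoidHom.mem_ker, h.mulLeft_apply] at hr ⊢
    rw [GRingData.toMod, h.smul_mul, hr, h.zero_smul]
  · rw [AddMonoidHom.mem_ker, h.mulLeft_apply] at hr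
    obtain ⟨s, cf, hcf, rfl⟩ := h𝒜.decompose r
    exact AddSubgroup.sum_mem _ fun τ hτ => AddSubgroup.subset_closure
      ⟨h.smul_eq_zero_of_smul_sum_eq_zero hx hcf hr hτ, _, _, _, hcf τ hτ⟩

lemma IsGrSimple.isGrMaximalSub_ker_mulLeft (hs : ℳ.IsGrSimple) (h𝒜 : 𝒜.IsObjectUnital)
    (h : ℳ.IsGraded 𝒜) {e f : Γ} {σ : e ⟶ f} {x : M} (hx : x ∈ ℳ.component σ)
    (hx0 : x ≠ 0) : 𝒜.toMod.IsGrMaximalSub (h.mulLeft x).ker := by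
  refine ⟨isGrSub_ker_mulLeft h𝒜 h hx, fun htop => hx0 ?_, fun L hL hKL => ?_⟩
  · have hone := htop ▸ AddSubgroup.mem_top (𝒜.one e)
    rwa [AddMonoidHom.mem_ker, h.mulLeft_apply, h.smul_one σ hx] at hone
  rcases hs.2 _ (isGrSub_map_mulLeft h ⟨e, f, σ, hx⟩ hL) with hbot | htop
  · exact Or.inl (le_antisymm ((AddSubgroup.map_eq_bot_iff _).mp hbot) hKL)
  · refine Or.inr (eq_top_iff.mpr fun r _ => ?_)
    obtain ⟨l, hl, hlr⟩ := htop ▸ AddSubgroup.mem_top (h.mulLeft x r)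
    have hrl : r - l ∈ (h.mulLeft x).ker := by
      rw [AddMonoidHom.mem_ker, map_sub, hlr, sub_self]
    simpa using add_mem (hKL hrl) hl

lemma IsGrSimple.smul_eq_zero_of_mem_grRad (hs : ℳ.IsGrSimple) (h𝒜 : 𝒜.IsObjectUnital)
    (h : ℳ.IsGraded 𝒜) (m : M) {a : R} (ha : a ∈ 𝒜.toMod.grRad) : ℳ.smul m a = 0 := by
  have hhom : ∀ (e f : Γ) (σ : e ⟶ f), ∀ x ∈ ℳ.component σ, ℳ.smul x a = 0 := by
    intro e f σ x hx
    by_cases hx0 : x = 0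
    · rw [hx0, h.zero_smul]
    · exact AddSubgroup.mem_sInf.mp ha _ (hs.isGrMaximalSub_ker_mulLeft h𝒜 h hx hx0)
  obtain ⟨s, cf, hcf, rfl⟩ := h.decompose m
  rw [← h.mulRight_apply, map_sum]
  exact Finset.sum_eq_zero fun γ hγ => hhom _ _ _ _ (hcf γ hγ)

lemma IsGrSimple.fg (hs : ℳ.IsGrSimple) (h𝒜 : 𝒜.IsObjectUnital) (h : ℳ.IsGraded 𝒜) :
    ℳ.FG := by
  obtain ⟨x, hx, hx0⟩ : ∃ x, ℳ.IsHomogeneous x ∧ x ≠ 0 := by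
    by_contra! hc
    refine hs.1 (eq_bot_iff.mpr fun m _ => ?_)
    obtain ⟨s, cf, hcf, rfl⟩ := h.decompose m
    exact AddSubgroup.mem_bot.mpr (Finset.sum_eq_zero fun γ hγ => hc _ ⟨_, _, _, hcf γ hγ⟩)
  obtain ⟨e, f, σ, hxσ⟩ := hx
  have hx_mem : x ∈ (⊤ : AddSubgroup R).map (h.mulLeft x) :=
    ⟨𝒜.one e, AddSubgroup.mem_top _, h.smul_one σ hxσ⟩
  have hxR : (⊤ : AddSubgroup R).map (h.mulLeft x) = ⊤ :=
    (hs.2 _ (isGrSub_map_mulLeft h ⟨e, f, σ, hxσ⟩ (isGrSub_top h𝒜.toMod_isGraded)))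
      |>.resolve_left fun hbot => hx0 (by simpa [hbot] using hx_mem)
  refine ⟨{x}, top_le_iff.mp (hxR ▸ ?_)⟩
  rintro _ ⟨r, -, rfl⟩
  exact ℳ.smul_mem_rClosure (ℳ.subset_rClosure _ (by simp)) r

lemma smulSet_le_iff {J : AddSubgroup R} {N : AddSubgroup M} :
    ℳ.smulSet J ≤ N ↔ ∀ m, ∀ a ∈ J, ℳ.smul m a ∈ N := by
  rw [smulSet, AddSubgroup.closure_le]
  refine ⟨fun hle m a ha => hle ⟨m, a, ha, rfl⟩, ?_⟩
  rintro hle _ ⟨m, a, ha, rfl⟩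
  exact hle m a ha

lemma IsGraded.quot_smulSet_eq_top (h : ℳ.IsGraded 𝒜) {N : AddSubgroup M}
    (hN : ∀ m ∈ N, ∀ a : R, ℳ.smul m a ∈ N) {J : AddSubgroup R}
    (hsup : N ⊔ ℳ.smulSet J = ⊤) : (ℳ.quot N).smulSet J = ⊤ := by
  have hMJ : ℳ.smulSet J ≤ ((ℳ.quot N).smulSet J).comap (QuotientAddGroup.mk' N) :=
    smulSet_le_iff.mpr fun m a ha => by
      rw [AddSubgroup.mem_comap, QuotientAddGroup.mk'_apply, ← h.quot_smul_mk hN]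
      exact AddSubgroup.subset_closure ⟨_, a, ha, rfl⟩
  have hle := hsup ▸ sup_le (QuotientAddGroup.le_comap_mk' N _) hMJ
  refine eq_top_iff.mpr fun x _ => ?_
  obtain ⟨m, rfl⟩ := QuotientAddGroup.mk_surjective x
  exact hle (AddSubgroup.mem_top m)

lemma _root_.GRingData.IsObjectUnital.le_toMod_smulSet (h𝒜 : 𝒜.IsObjectUnital)
    {J : AddSubgroup R} (hJ : 𝒜.toMod.IsGrSub J) : J ≤ 𝒜.toMod.smulSet J := by
  intro j hj
  refine (AddSubgroup.closure_le _).mpr ?_ (hJ.2 j hj)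
  rintro w ⟨hwJ, e, f, τ, hw⟩
  exact AddSubgroup.subset_closure ⟨𝒜.one f, w, hwJ, (h𝒜.one_mul τ hw).symm⟩

end GModData

/-- (Graded Nakayama lemma.) Let `R` be a `Γ`-graded ring and
`J` a graded right ideal of `R`. The following are equivalent:
(1) `J ⊆ rad^gr(R)`; (2) for every finitely generated `Γ`-graded right
`R`-module `M`, `M J = M` implies `M = 0`; (3) for every `Γ`-graded right
`R`-module `M` and every graded submodule `N` of `M` with `M/N` finitely
generated, `N + M J = M` implies `N = M`. -/
theorem graded_nakayama_tfae
    {Γ : Type u} [Groupoid.{u} Γ] {R : Type u} [AddCommGroup R]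
    (𝒜 : GRingData Γ R) (h𝒜 : 𝒜.IsObjectUnital)
    (J : AddSubgroup R) (hJ : 𝒜.toMod.IsGrSub J) :
    List.TFAE [
      J ≤ 𝒜.toMod.grRad,
      ∀ (M : Type u) [AddCommGroup M] (ℳ : GModData Γ R M),
        ℳ.IsGraded 𝒜 → ℳ.FG → ℳ.smulSet J = ⊤ → ∀ m : M, m = 0,
      ∀ (M : Type u) [AddCommGroup M] (ℳ : GModData Γ R M),
        ℳ.IsGraded 𝒜 → ∀ N : AddSubgroup M, ℳ.IsGrSub N → (ℳ.quot N).FG →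
          N ⊔ ℳ.smulSet J = ⊤ → N = ⊤ ] := by
  tfae_have 1 → 2 := by
    intro hJrad M _ ℳ h hfg hMJ m
    by_contra hm
    obtain ⟨P, hP⟩ := h.exists_isGrMaximalSub hfg fun hbot =>
      hm (AddSubgroup.mem_bot.mp (hbot ▸ AddSubgroup.mem_top m))
    refine hP.2.1 (eq_top_iff.mpr (hMJ ▸ GModData.smulSet_le_iff.mpr fun x a ha => ?_))
    rw [← QuotientAddGroup.eq_zero_iff, ← h.quot_smul_mk hP.1.1]
    exact (hP.isGrSimple_quot h).smul_eq_zero_of_mem_grRad h𝒜 (h.quot hP.1) _ (hJrad ha)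
  tfae_have 2 → 3 := by
    intro h2 M _ ℳ h N hN hfg hsup
    have hzero := h2 (M ⧸ N) (ℳ.quot N) (h.quot hN) hfg (h.quot_smulSet_eq_top hN.1 hsup)
    exact (AddSubgroup.eq_top_iff' N).mpr fun m => (QuotientAddGroup.eq_zero_iff m).mp (hzero _)
  tfae_have 3 → 1 := by
    intro h3 j hj
    refine AddSubgroup.mem_sInf.mpr fun P hP => ?_
    by_contra hjP
    have hR := h𝒜.toMod_isGraded
    have hPJ : P ⊔ J = ⊤ := (hP.2.2 _ (hP.1.sup hR hJ) le_sup_left).resolve_left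
      fun hPJ => hjP (hPJ ▸ AddSubgroup.mem_sup_right hj)
    have hfg := (hP.isGrSimple_quot hR).fg h𝒜 (hR.quot hP.1)
    exact hP.2.1 (h3 R 𝒜.toMod hR P hP.1 hfg
      (top_le_iff.mp (hPJ ▸ sup_le_sup_left (h𝒜.le_toMod_smulSet hJ) P)))
  tfae_finish
end
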